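/- arXiv:1112.2120 — 3 statements merged into one kernel-verified Lean document; each statement's English description precedes it below -/
import Mathlib

section
/- For every positive integer n, the number of matchings of size n with no left nesting equals n!. -/
/-! ## Permutations of `{1,…,n}` encoded as functions `ℕ → ℕ` (zero outside `[1,n]`). -/

/-- `f` represents a permutation of `{1,…,n}` in one-line notation:
`f j` is the value in position `j` (for `1 ≤ j ≤ n`), and `f` is `0` elsewhere. -/
def IsPermOn (n : ℕ) (f : ℕ → ℕ) : Prop :=
  Set.BijOn f (Set.Icc 1 n) (Set.Icc 1 n) ∧ ∀ i, i ∉ Set.Icc 1 n → f i = 0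

/-- Ascent tops: values `f j` with `2 ≤ j ≤ n` and `f (j-1) < f j`. -/
def permAsc (n : ℕ) (f : ℕ → ℕ) : Set ℕ :=
  {v | ∃ j, 2 ≤ j ∧ j ≤ n ∧ f (j - 1) < f j ∧ v = f j}

/-- Short ascents (adjacencies): ascent tops with `f (j-1) + 1 = f j`. -/
def permAdjAsc (n : ℕ) (f : ℕ → ℕ) : Set ℕ :=
  {v | ∃ j, 2 ≤ j ∧ j ≤ n ∧ f (j - 1) + 1 = f j ∧ v = f j}

/-- Occurrences of the pattern `P`: ascent tops `f j` such that the value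
`f j - 1` occurs in a position greater than `j`. -/
def permP (n : ℕ) (f : ℕ → ℕ) : Set ℕ :=
  {v | ∃ j, 2 ≤ j ∧ j ≤ n ∧ f (j - 1) < f j ∧ v = f j ∧
    ∃ k, j < k ∧ k ≤ n ∧ f k = f j - 1}

/-- Occurrences of the pattern `Q`: ascent tops `f j` such that the value
`f j - 1` occurs in a position less than `j - 1`. -/
def permQ (n : ℕ) (f : ℕ → ℕ) : Set ℕ :=
  {v | ∃ j, 2 ≤ j ∧ j ≤ n ∧ f (j - 1) < f j ∧ v = f j ∧
    ∃ k, 1 ≤ k ∧ k + 1 < j ∧ f k = f j - 1}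

/-- Silly ascents: `(Asc(π) ∪ {π 1}) \ {n}`. -/
def permAscSilly (n : ℕ) (f : ℕ → ℕ) : Set ℕ :=
  (permAsc n f ∪ {f 1}) \ {n}

/-- Occurrences of the silly pattern `P`: silly ascents `a` such that the value
`a + 1` occurs to the left of the value `a`. -/
def permPSilly (n : ℕ) (f : ℕ → ℕ) : Set ℕ :=
  {a | a ∈ permAscSilly n f ∧ ∃ j k, 1 ≤ j ∧ j < k ∧ k ≤ n ∧ f j = a + 1 ∧ f k = a}

/-- Occurrences of the silly pattern `Q`: silly ascents `a` such that the value
`a + 1` occurs to the right of the value `a`. -/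
def permQSilly (n : ℕ) (f : ℕ → ℕ) : Set ℕ :=
  {a | a ∈ permAscSilly n f ∧ ∃ j k, 1 ≤ j ∧ j < k ∧ k ≤ n ∧ f j = a ∧ f k = a + 1}

/-- Right minima: values having no smaller value to their right. -/
def permRmin (n : ℕ) (f : ℕ → ℕ) : Set ℕ :=
  {v | ∃ j, 1 ≤ j ∧ j ≤ n ∧ v = f j ∧ ∀ k, j < k → k ≤ n → f j < f k}

/-- Right maxima: values having no larger value to their right. -/
def permRmax (n : ℕ) (f : ℕ → ℕ) : Set ℕ :=
  {v | ∃ j, 1 ≤ j ∧ j ≤ n ∧ v = f j ∧ ∀ k, j < k → k ≤ n → f k < f j}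

/-- The number of components of the finest decomposition of a permutation into
direct sums: the number of `k ∈ [1,n]` such that `f` maps `{1,…,k}` into itself. -/
noncomputable def permComp (n : ℕ) (f : ℕ → ℕ) : ℕ :=
  Set.ncard {k | 1 ≤ k ∧ k ≤ n ∧ ∀ i, 1 ≤ i → i ≤ k → f i ≤ k}

/-- The number of descents. -/
noncomputable def permDes (n : ℕ) (f : ℕ → ℕ) : ℕ :=
  Set.ncard {j | 2 ≤ j ∧ j ≤ n ∧ f j < f (j - 1)}

/-- Ascent bottoms: values `f j` with `1 ≤ j < n` and `f j < f (j+1)`. -/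
def permAscBottom (n : ℕ) (f : ℕ → ℕ) : Set ℕ :=
  {v | ∃ j, 1 ≤ j ∧ j + 1 ≤ n ∧ f j < f (j + 1) ∧ v = f j}

/-- Long ascent bottoms: values `f j` with `1 ≤ j < n` and `f j < f (j+1) - 1`. -/
def permAscBottomProper (n : ℕ) (f : ℕ → ℕ) : Set ℕ :=
  {v | ∃ j, 1 ≤ j ∧ j + 1 ≤ n ∧ f j + 1 < f (j + 1) ∧ v = f j}

/-! ## Matchings on `{1,…,2n}`.

The arcs are indexed `1,…,n` in increasing order of their closers; `opener i`
and `closer i` are the endpoints of the `i`-th arc (and `0` outside `[1,n]`). -/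

structure Matching (n : ℕ) where
  opener : ℕ → ℕ
  closer : ℕ → ℕ
  opener_lt_closer : ∀ i, 1 ≤ i → i ≤ n → opener i < closer i
  closer_mono : ∀ i j, 1 ≤ i → i < j → j ≤ n → closer i < closer j
  opener_mem : ∀ i, 1 ≤ i → i ≤ n → opener i ∈ Set.Icc 1 (2 * n)
  closer_mem : ∀ i, 1 ≤ i → i ≤ n → closer i ∈ Set.Icc 1 (2 * n)
  opener_inj : ∀ i j, 1 ≤ i → i ≤ n → 1 ≤ j → j ≤ n → opener i = opener j → i = j
  opener_ne_closer : ∀ i j, 1 ≤ i → i ≤ n → 1 ≤ j → j ≤ n → opener i ≠ closer j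
  cover : ∀ m ∈ Set.Icc 1 (2 * n), ∃ i, 1 ≤ i ∧ i ≤ n ∧ (opener i = m ∨ closer i = m)
  opener_eq_zero : ∀ i, i ∉ Set.Icc 1 n → opener i = 0
  closer_eq_zero : ∀ i, i ∉ Set.Icc 1 n → closer i = 0

namespace Matching

variable {n : ℕ}

/-- No left nesting: no pair of arcs `A, B` with `opener A = opener B + 1`
and `closer A < closer B`. -/
def NoLeftNesting (M : Matching n) : Prop :=
  ∀ i j, 1 ≤ i → i ≤ n → 1 ≤ j → j ≤ n →
    ¬(M.opener i = M.opener j + 1 ∧ M.closer i < M.closer j)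

/-- Right nestings, indexed by the arc with the larger closer. -/
def RneSet (M : Matching n) : Set ℕ :=
  {i | 2 ≤ i ∧ i ≤ n ∧ M.opener i < M.opener (i - 1) ∧ M.closer i = M.closer (i - 1) + 1}

/-- Right crossings, indexed by the arc with the larger closer. -/
def RcrSet (M : Matching n) : Set ℕ :=
  {i | 2 ≤ i ∧ i ≤ n ∧ M.opener (i - 1) < M.opener i ∧ M.opener i < M.closer (i - 1) ∧
    M.closer i = M.closer (i - 1) + 1}

/-- Double crossings (both left and right crossings), indexed by the right arc. -/
def LRcrSet (M : Matching n) : Set ℕ :=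
  {i | i ∈ M.RcrSet ∧ M.opener i = M.opener (i - 1) + 1}

/-- Right single crossings. -/
def RcrpSet (M : Matching n) : Set ℕ := M.RcrSet \ M.LRcrSet

/-- Right adjacencies, indexed by the arc with the larger closer. -/
def RadjSet (M : Matching n) : Set ℕ :=
  {i | 2 ≤ i ∧ i ≤ n ∧ M.closer i = M.closer (i - 1) + 1}

/-- Left crossings, indexed by the arc with the smaller opener. -/
def LcrSet (M : Matching n) : Set ℕ :=
  {i | 1 ≤ i ∧ i ≤ n ∧ ∃ j, 1 ≤ j ∧ j ≤ n ∧ M.opener j = M.opener i + 1 ∧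
    M.opener j < M.closer i ∧ M.closer i < M.closer j}

/-- `Min(M)`: arcs whose opener lies to the left of the first closer. -/
def MinSet (M : Matching n) : Set ℕ :=
  {i | 1 ≤ i ∧ i ≤ n ∧ M.opener i < M.closer 1}

/-- The number of components of the finest decomposition of `M` into direct sums:
the number of `k ∈ [1,n]` such that `{1,…,2k}` is a union of arcs. -/
noncomputable def comp (M : Matching n) : ℕ :=
  Set.ncard {k | 1 ≤ k ∧ k ≤ n ∧
    ∀ i, 1 ≤ i → i ≤ n → (M.closer i ≤ 2 * k ∨ 2 * k < M.opener i)}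

/-- `S` is the direct sum of `M` (size `n₁`) and `M'` (size `n₂`): the diagrams
side by side, the elements of `M'` shifted by `2 n₁`. -/
def IsDsum {n₁ n₂ m : ℕ} (M : Matching n₁) (M' : Matching n₂) (S : Matching m) : Prop :=
  m = n₁ + n₂ ∧
  (∀ i, 1 ≤ i → i ≤ n₁ → S.opener i = M.opener i ∧ S.closer i = M.closer i) ∧
  (∀ i, 1 ≤ i → i ≤ n₂ → S.opener (n₁ + i) = M'.opener i + 2 * n₁ ∧
    S.closer (n₁ + i) = M'.closer i + 2 * n₁)

end Matching

/-! ## 0-1-fillings of partition shapes.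

The shape has `len ≥ 1` columns; column `i` (for `1 ≤ i ≤ len`) has height
`shape i ≥ 1`, weakly increasing from left to right (and `shape i = 0` outside
`[1, len]`).  The dots are the cells holding a `1`. -/

structure Filling where
  len : ℕ
  shape : ℕ → ℕ
  dots : Set (ℕ × ℕ)
  len_pos : 1 ≤ len
  shape_pos : ∀ i, 1 ≤ i → i ≤ len → 1 ≤ shape i
  shape_mono : ∀ i j, 1 ≤ i → i ≤ j → j ≤ len → shape i ≤ shape j
  shape_eq_zero : ∀ i, i ∉ Set.Icc 1 len → shape i = 0
  dots_mem : ∀ p ∈ dots, 1 ≤ p.1 ∧ p.1 ≤ len ∧ 1 ≤ p.2 ∧ p.2 ≤ shape p.1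

namespace Filling

/-- The number of dots of a filling. -/
noncomputable def nDots (T : Filling) : ℕ := Set.ncard T.dots

/-- Every column contains exactly one dot. -/
def ColumnStrict (T : Filling) : Prop :=
  ∀ i, 1 ≤ i → i ≤ T.len → ∃! j, (i, j) ∈ T.dots

/-- Every column contains at least one dot. -/
def ColumnPositive (T : Filling) : Prop :=
  ∀ i, 1 ≤ i → i ≤ T.len → ∃ j, (i, j) ∈ T.dots

/-- The length of row `j`: the number of columns of height at least `j`. -/
noncomputable def rowLen (T : Filling) (j : ℕ) : ℕ :=
  Set.ncard {i | 1 ≤ i ∧ i ≤ T.len ∧ j ≤ T.shape i}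

/-- A shape is flat if its nonempty rows have pairwise distinct lengths. -/
def Flat (T : Filling) : Prop :=
  ∀ j j', 1 ≤ j → 1 ≤ j' → j ≠ j' → 1 ≤ T.rowLen j → 1 ≤ T.rowLen j' →
    T.rowLen j ≠ T.rowLen j'

/-- A staircase shape: `shape = (1, 2, …, len)`. -/
def Staircase (T : Filling) : Prop :=
  ∀ i, 1 ≤ i → i ≤ T.len → T.shape i = i

/-- The lazy set `X(T)`: columns having the same height as their left neighbour. -/
def lazySet (T : Filling) : Set ℕ :=
  {i | 2 ≤ i ∧ i ≤ T.len ∧ T.shape (i - 1) = T.shape i}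

/-- Descents of a column-strict filling: columns whose dot is strictly lower
than the dot of the previous column. -/
def DesSet (T : Filling) : Set ℕ :=
  {i | 2 ≤ i ∧ i ≤ T.len ∧ ∃ j j', (i - 1, j) ∈ T.dots ∧ (i, j') ∈ T.dots ∧ j' < j}

/-- Ascents of a column-strict filling. -/
def AscSet (T : Filling) : Set ℕ :=
  {i | 2 ≤ i ∧ i ≤ T.len ∧ ∃ j j', (i - 1, j) ∈ T.dots ∧ (i, j') ∈ T.dots ∧ j < j'}

/-- Repetitions of a column-strict filling. -/
def RepSet (T : Filling) : Set ℕ :=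
  {i | 2 ≤ i ∧ i ≤ T.len ∧ ∃ j, (i - 1, j) ∈ T.dots ∧ (i, j) ∈ T.dots}

/-- Columns with a dot in their topmost cell. -/
def MaxSet (T : Filling) : Set ℕ :=
  {i | 1 ≤ i ∧ i ≤ T.len ∧ (i, T.shape i) ∈ T.dots}

/-- Columns with a dot on the bottom row. -/
def MinSet (T : Filling) : Set ℕ :=
  {i | 1 ≤ i ∧ i ≤ T.len ∧ (i, 1) ∈ T.dots}

/-- For a column-strict filling: columns whose dot is strictly closer to the top
of its column than is any dot strictly to the right. -/
def RmaxColSet (T : Filling) : Set ℕ :=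
  {i | ∃ j, (i, j) ∈ T.dots ∧
    ∀ i' j', (i', j') ∈ T.dots → i < i' → T.shape i - j < T.shape i' - j'}

/-- `rmax(T)`: the number of dots strictly closer to the top of their column
than is any dot strictly to the right. -/
noncomputable def rmaxDots (T : Filling) : ℕ :=
  Set.ncard {p | p ∈ T.dots ∧
    ∀ q ∈ T.dots, p.1 < q.1 → T.shape p.1 - p.2 < T.shape q.1 - q.2}

/-- `lmin(T)`: the number of dots strictly to the left of any dot strictly below. -/
noncomputable def lminDots (T : Filling) : ℕ :=
  Set.ncard {p | p ∈ T.dots ∧ ∀ q ∈ T.dots, q.2 < p.2 → p.1 < q.1}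

/-- The number of components of the finest decomposition of `T` into direct sums:
the number of columns `k` after which the filling can be cut. -/
noncomputable def comp (T : Filling) : ℕ :=
  Set.ncard {k | 1 ≤ k ∧ k ≤ T.len ∧ (k = T.len ∨ T.shape k < T.shape (k + 1)) ∧
    ∀ p ∈ T.dots, k < p.1 → T.shape k < p.2}

/-- `S = T ⊕ T'`: `T'` is placed strictly to the north-east of `T`, the
rectangle below `T'` being filled with empty cells. -/
def IsDsum (T T' S : Filling) : Prop :=
  S.len = T.len + T'.len ∧
  (∀ i, 1 ≤ i → i ≤ T.len → S.shape i = T.shape i) ∧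
  (∀ i, 1 ≤ i → i ≤ T'.len → S.shape (T.len + i) = T.shape T.len + T'.shape i) ∧
  S.dots = T.dots ∪ (fun p : ℕ × ℕ => (p.1 + T.len, p.2 + T.shape T.len)) '' T'.dots

/-- A square shape. -/
def Square (T : Filling) : Prop :=
  ∀ i, 1 ≤ i → i ≤ T.len → T.shape i = T.len

/-- Enriched permutation filling: a positive filling of a square shape in which
a dot is the leftmost dot of its row iff it is the topmost dot of its column. -/
def Enriched (T : Filling) : Prop :=
  T.Square ∧
  (∀ i, 1 ≤ i → i ≤ T.len → ∃ j, (i, j) ∈ T.dots) ∧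
  (∀ j, 1 ≤ j → j ≤ T.len → ∃ i, (i, j) ∈ T.dots) ∧
  (∀ p ∈ T.dots,
    ((∀ q ∈ T.dots, q.2 = p.2 → p.1 ≤ q.1) ↔ (∀ q ∈ T.dots, q.1 = p.1 → q.2 ≤ p.2)))

/-- `S = R ⊞ R'`: boxed sum of enriched permutation fillings. -/
def IsBoxSum (R R' S : Filling) : Prop :=
  S.len = R.len + R'.len ∧
  (∀ i, 1 ≤ i → i ≤ S.len → S.shape i = S.len) ∧
  S.dots = R.dots ∪ (fun p : ℕ × ℕ => (p.1 + R.len, p.2 + R.len)) '' R'.dots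

/-- The number of components of the finest decomposition into boxed sums. -/
noncomputable def boxcomp (T : Filling) : ℕ :=
  Set.ncard {k | 1 ≤ k ∧ k ≤ T.len ∧
    ∀ p ∈ T.dots, (p.1 ≤ k ∧ p.2 ≤ k) ∨ (k < p.1 ∧ k < p.2)}

end Filling

/-! ## Barred permutations, hatted permutations and marked matchings. -/

/-- A barred permutation: a permutation of `{1,…,n}` together with a set of
barred ascent tops. -/
structure BarredPerm where
  n : ℕ
  toFun : ℕ → ℕ
  X : Set ℕ
  n_pos : 1 ≤ n
  isPerm : IsPermOn n toFun
  X_subset : X ⊆ permAsc n toFun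

/-- Direct sum of barred permutations. -/
def BarredPerm.IsDsum (B B' C : BarredPerm) : Prop :=
  C.n = B.n + B'.n ∧
  (∀ i, C.toFun i = if i ≤ B.n then B.toFun i
    else if i ≤ B.n + B'.n then B'.toFun (i - B.n) + B.n else 0) ∧
  C.X = B.X ∪ (fun a => a + B.n) '' B'.X

/-- A hatted permutation: a permutation of `{1,…,n}` together with a set of
hatted silly ascents. -/
structure HattedPerm where
  n : ℕ
  toFun : ℕ → ℕ
  X : Set ℕ
  n_pos : 1 ≤ n
  isPerm : IsPermOn n toFun
  X_subset : X ⊆ permAscSilly n toFun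

/-- Direct sum of hatted permutations. -/
def HattedPerm.IsDsum (B B' C : HattedPerm) : Prop :=
  C.n = B.n + B'.n ∧
  (∀ i, C.toFun i = if i ≤ B.n then B.toFun i
    else if i ≤ B.n + B'.n then B'.toFun (i - B.n) + B.n else 0) ∧
  C.X = B.X ∪ (fun a => a + B.n) '' B'.X

/-- A marked matching: a matching without left nestings together with a set of
marked right adjacencies. -/
structure MarkedMatching where
  n : ℕ
  n_pos : 1 ≤ n
  M : Matching n
  noLeftNesting : M.NoLeftNesting
  X : Set ℕ
  X_subset : X ⊆ M.RadjSet

/-- Direct sum of marked matchings. -/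
def MarkedMatching.IsDsum (A B C : MarkedMatching) : Prop :=
  Matching.IsDsum A.M B.M C.M ∧ C.X = A.X ∪ (fun a => a + A.n) '' B.X

/-! In a matching of size `n + 1` the last arc closes at `2n + 2`. If there is no left
nesting, the point right after its opener `p` is not an opener (that arc would be
left-nested under the last one), so `p + 1` is one of the `n` other closers or `p = 2n + 1`.
Erasing the last arc leaves a matching of size `n` without left nesting, and conversely
a new last arc whose opener is put immediately before one of these `n + 1` points creates
no left nesting. Hence the count is multiplied by `n + 1` at each step. -/

namespace Matching

variable {n : ℕ}

/-- Renumbering of the points that frees the position `p`; `shiftDown p` undoes it. -/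
def shiftUp (p x : ℕ) : ℕ := if p ≤ x then x + 1 else x

def shiftDown (p x : ℕ) : ℕ := if p < x then x - 1 else x

lemma shiftUp_strictMono (p : ℕ) : StrictMono (shiftUp p) := by
  intro x y h
  unfold shiftUp
  split_ifs <;> omega

lemma shiftUp_ne (p x : ℕ) : shiftUp p x ≠ p := by
  unfold shiftUp
  split_ifs <;> omega

lemma shiftDown_shiftUp (p x : ℕ) : shiftDown p (shiftUp p x) = x := by
  unfold shiftDown shiftUp
  split_ifs <;> omega

lemma shiftUp_shiftDown {p x : ℕ} (hx : x ≠ p) : shiftUp p (shiftDown p x) = x := by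
  unfold shiftDown shiftUp
  split_ifs <;> omega

lemma shiftDown_lt_shiftDown_iff {p x y : ℕ} (hx : x ≠ p) (hy : y ≠ p) :
    shiftDown p x < shiftDown p y ↔ x < y := by
  rw [← (shiftUp_strictMono p).lt_iff_lt, shiftUp_shiftDown hx, shiftUp_shiftDown hy]

lemma shiftDown_injOn (p : ℕ) : Set.InjOn (shiftDown p) {p}ᶜ := fun x hx y hy h => by
  rw [← shiftUp_shiftDown hx, h, shiftUp_shiftDown hy]

lemma shiftUp_mem_Icc (p : ℕ) {x m : ℕ} (hx : x ∈ Set.Icc 1 m) :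
    shiftUp p x ∈ Set.Icc 1 (m + 1) := by
  obtain ⟨hx1, hx2⟩ := hx
  unfold shiftUp
  split_ifs <;> constructor <;> omega

lemma shiftDown_mem_Icc {p x m : ℕ} (hp : p ∈ Set.Icc 1 (m + 1))
    (hx : x ∈ Set.Icc 1 (m + 1)) (hxp : x ≠ p) : shiftDown p x ∈ Set.Icc 1 m := by
  obtain ⟨hp1, hp2⟩ := hp
  obtain ⟨hx1, hx2⟩ := hx
  unfold shiftDown
  split_ifs <;> constructor <;> omega

@[ext]
lemma ext {M N : Matching n} (ho : M.opener = N.opener) (hc : M.closer = N.closer) :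
    M = N := by
  cases M
  cases N
  cases ho
  cases hc
  rfl

lemma closer_strictMonoOn (M : Matching n) : StrictMonoOn M.closer (Set.Icc 1 n) :=
  fun i hi j hj hij => M.closer_mono i j hi.1 hij hj.2

lemma opener_le (M : Matching n) (i : ℕ) : M.opener i ≤ 2 * n := by
  by_cases hi : i ∈ Set.Icc 1 n
  · exact (M.opener_mem i hi.1 hi.2).2
  · rw [M.opener_eq_zero i hi]
    exact Nat.zero_le _

lemma closer_last (M : Matching (n + 1)) : M.closer (n + 1) = 2 * (n + 1) := by
  obtain ⟨i, hi1, hi2, h⟩ := M.cover (2 * (n + 1)) ⟨by omega, le_rfl⟩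
  have hlt := M.opener_lt_closer i hi1 hi2
  have hmem := (M.closer_mem (n + 1) (by omega) le_rfl).2
  rcases h with h | h
  · have := (M.closer_mem i hi1 hi2).2
    omega
  · rcases hi2.eq_or_lt with rfl | hin
    · exact h
    · have := M.closer_mono i (n + 1) hi1 hin le_rfl
      omega

lemma closer_lt_of_ne_last (M : Matching (n + 1)) {i : ℕ} (hi : i ≠ n + 1) :
    M.closer i < 2 * (n + 1) := by
  by_cases hi' : i ∈ Set.Icc 1 (n + 1)
  · rw [← M.closer_last]
    exact M.closer_mono i (n + 1) hi'.1 (lt_of_le_of_ne hi'.2 hi) le_rfl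
  · rw [M.closer_eq_zero i hi']
    omega

lemma opener_last_mem (M : Matching (n + 1)) : M.opener (n + 1) ∈ Set.Icc 1 (2 * n + 1) := by
  have := M.opener_lt_closer (n + 1) (by omega) le_rfl
  rw [closer_last] at this
  exact ⟨(M.opener_mem (n + 1) (by omega) le_rfl).1, by omega⟩

lemma opener_ne_opener_last (M : Matching (n + 1)) {i : ℕ} (hi : i ≠ n + 1) :
    M.opener i ≠ M.opener (n + 1) := by
  by_cases hi' : i ∈ Set.Icc 1 (n + 1)
  · exact fun h => hi (M.opener_inj i (n + 1) hi'.1 hi'.2 (by omega) le_rfl h)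
  · rw [M.opener_eq_zero i hi']
    exact (M.opener_last_mem.1.trans_lt' zero_lt_one).ne

lemma closer_ne_opener_last (M : Matching (n + 1)) (i : ℕ) :
    M.closer i ≠ M.opener (n + 1) := by
  by_cases hi : i ∈ Set.Icc 1 (n + 1)
  · exact (M.opener_ne_closer (n + 1) i (by omega) le_rfl hi.1 hi.2).symm
  · rw [M.closer_eq_zero i hi]
    exact (M.opener_last_mem.1.trans_lt' zero_lt_one).ne

lemma endpoints_mem_Icc_of_le (M : Matching (n + 1)) {i : ℕ} (hi1 : 1 ≤ i) (hi2 : i ≤ n) :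
    M.opener i ∈ Set.Icc 1 (2 * n + 1) ∧ M.closer i ∈ Set.Icc 1 (2 * n + 1) := by
  have := M.opener_lt_closer i hi1 (by omega)
  have := M.closer_lt_of_ne_last (i := i) (by omega)
  exact ⟨⟨(M.opener_mem i hi1 (by omega)).1, by omega⟩,
    ⟨(M.closer_mem i hi1 (by omega)).1, by omega⟩⟩

def eraseLast (M : Matching (n + 1)) : Matching n where
  opener i := if i = n + 1 then 0 else shiftDown (M.opener (n + 1)) (M.opener i)
  closer i := if i = n + 1 then 0 else shiftDown (M.opener (n + 1)) (M.closer i)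
  opener_lt_closer i hi1 hi2 := by
    rw [if_neg (by omega), if_neg (by omega), shiftDown_lt_shiftDown_iff
      (M.opener_ne_opener_last (by omega)) (M.closer_ne_opener_last i)]
    exact M.opener_lt_closer i hi1 (by omega)
  closer_mono i j hi1 hij hj := by
    rw [if_neg (by omega), if_neg (by omega), shiftDown_lt_shiftDown_iff
      (M.closer_ne_opener_last i) (M.closer_ne_opener_last j)]
    exact M.closer_mono i j hi1 hij (by omega)
  opener_mem i hi1 hi2 := by
    rw [if_neg (by omega)]
    exact shiftDown_mem_Icc M.opener_last_mem (M.endpoints_mem_Icc_of_le hi1 hi2).1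
      (M.opener_ne_opener_last (by omega))
  closer_mem i hi1 hi2 := by
    rw [if_neg (by omega)]
    exact shiftDown_mem_Icc M.opener_last_mem (M.endpoints_mem_Icc_of_le hi1 hi2).2
      (M.closer_ne_opener_last i)
  opener_inj i j hi1 hi2 hj1 hj2 h := by
    rw [if_neg (by omega), if_neg (by omega)] at h
    exact M.opener_inj i j hi1 (by omega) hj1 (by omega) (shiftDown_injOn _
      (M.opener_ne_opener_last (by omega)) (M.opener_ne_opener_last (by omega)) h)
  opener_ne_closer i j hi1 hi2 hj1 hj2 h := by
    rw [if_neg (by omega), if_neg (by omega)] at h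
    exact M.opener_ne_closer i j hi1 (by omega) hj1 (by omega) (shiftDown_injOn _
      (M.opener_ne_opener_last (by omega)) (M.closer_ne_opener_last j) h)
  cover m hm := by
    have hup := shiftUp_mem_Icc (M.opener (n + 1)) hm
    obtain ⟨i, hi1, hi2, h⟩ :=
      M.cover (shiftUp (M.opener (n + 1)) m) ⟨hup.1, hup.2.trans (by omega)⟩
    have hin : i ≠ n + 1 := by
      rintro rfl
      rcases h with h | h
      · exact shiftUp_ne _ _ h.symm
      · have := hup.2
        rw [closer_last] at h
        omega
    refine ⟨i, hi1, by omega, ?_⟩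
    simp only [if_neg hin]
    exact h.imp (fun h => by rw [h, shiftDown_shiftUp]) (fun h => by rw [h, shiftDown_shiftUp])
  opener_eq_zero i hi := by
    split_ifs with hin
    · rfl
    · rw [M.opener_eq_zero i (by simp only [Set.mem_Icc] at hi ⊢; omega)]
      rfl
  closer_eq_zero i hi := by
    split_ifs with hin
    · rfl
    · rw [M.closer_eq_zero i (by simp only [Set.mem_Icc] at hi ⊢; omega)]
      rfl

lemma eraseLast_opener (M : Matching (n + 1)) {i : ℕ} (hi : i ≠ n + 1) :
    M.eraseLast.opener i = shiftDown (M.opener (n + 1)) (M.opener i) :=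
  if_neg hi

lemma eraseLast_closer (M : Matching (n + 1)) {i : ℕ} (hi : i ≠ n + 1) :
    M.eraseLast.closer i = shiftDown (M.opener (n + 1)) (M.closer i) :=
  if_neg hi

def insertLast (M : Matching n) (p : ℕ) (hp : p ∈ Set.Icc 1 (2 * n + 1)) :
    Matching (n + 1) where
  opener i := if i = n + 1 then p else shiftUp p (M.opener i)
  closer i := if i = n + 1 then 2 * (n + 1) else shiftUp p (M.closer i)
  opener_lt_closer i hi1 hi2 := by
    split_ifs with hi
    · have := hp.2
      omega
    · exact shiftUp_strictMono p (M.opener_lt_closer i hi1 (by omega))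
  closer_mono i j hi1 hij hj := by
    have := (shiftUp_mem_Icc p (M.closer_mem i hi1 (by omega))).2
    split_ifs with hi hj' <;> first
      | omega
      | exact shiftUp_strictMono p (M.closer_mono i j hi1 hij (by omega))
  opener_mem i hi1 hi2 := by
    split_ifs with hi
    · exact ⟨hp.1, hp.2.trans (by omega)⟩
    · have := shiftUp_mem_Icc p (M.opener_mem i hi1 (by omega))
      exact ⟨this.1, this.2.trans (by omega)⟩
  closer_mem i hi1 hi2 := by
    split_ifs with hi
    · exact ⟨by omega, le_rfl⟩
    · have := shiftUp_mem_Icc p (M.closer_mem i hi1 (by omega))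
      exact ⟨this.1, this.2.trans (by omega)⟩
  opener_inj i j hi1 hi2 hj1 hj2 h := by
    split_ifs at h with hi hj hj
    · omega
    · exact absurd h.symm (shiftUp_ne p _)
    · exact absurd h (shiftUp_ne p _)
    · exact M.opener_inj i j hi1 (by omega) hj1 (by omega) ((shiftUp_strictMono p).injective h)
  opener_ne_closer i j hi1 hi2 hj1 hj2 h := by
    split_ifs at h with hi hj hj
    · have := hp.2
      omega
    · exact shiftUp_ne p _ h.symm
    · have := (shiftUp_mem_Icc p (M.opener_mem i hi1 (by omega))).2
      omega
    · exact M.opener_ne_closer i j hi1 (by omega) hj1 (by omega)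
        ((shiftUp_strictMono p).injective h)
  cover m hm := by
    by_cases hmp : m = p
    · exact ⟨n + 1, by omega, le_rfl, Or.inl (by rw [if_pos rfl, hmp])⟩
    by_cases hml : m = 2 * (n + 1)
    · exact ⟨n + 1, by omega, le_rfl, Or.inr (by rw [if_pos rfl, hml])⟩
    obtain ⟨i, hi1, hi2, h⟩ := M.cover (shiftDown p m)
      (shiftDown_mem_Icc hp ⟨hm.1, by have := hm.2; omega⟩ hmp)
    refine ⟨i, hi1, by omega, ?_⟩
    simp only [if_neg (show i ≠ n + 1 by omega)]
    exact h.imp (fun h => by rw [h, shiftUp_shiftDown hmp])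
      (fun h => by rw [h, shiftUp_shiftDown hmp])
  opener_eq_zero i hi := by
    have hi' : i ∉ Set.Icc 1 n := by simp only [Set.mem_Icc] at hi ⊢; omega
    rw [if_neg (by simp only [Set.mem_Icc] at hi; omega), M.opener_eq_zero i hi', shiftUp,
      if_neg (by have := hp.1; omega)]
  closer_eq_zero i hi := by
    have hi' : i ∉ Set.Icc 1 n := by simp only [Set.mem_Icc] at hi ⊢; omega
    rw [if_neg (by simp only [Set.mem_Icc] at hi; omega), M.closer_eq_zero i hi', shiftUp,
      if_neg (by have := hp.1; omega)]

section insertLast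

variable (M : Matching n) {p : ℕ} (hp : p ∈ Set.Icc 1 (2 * n + 1))

lemma insertLast_opener_last : (M.insertLast p hp).opener (n + 1) = p :=
  if_pos rfl

lemma insertLast_closer_last : (M.insertLast p hp).closer (n + 1) = 2 * (n + 1) :=
  if_pos rfl

lemma insertLast_opener {i : ℕ} (hi : i ≠ n + 1) :
    (M.insertLast p hp).opener i = shiftUp p (M.opener i) :=
  if_neg hi

lemma insertLast_closer {i : ℕ} (hi : i ≠ n + 1) :
    (M.insertLast p hp).closer i = shiftUp p (M.closer i) :=
  if_neg hi

lemma eraseLast_insertLast : (M.insertLast p hp).eraseLast = M := by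
  ext i <;> by_cases hi : i = n + 1
  · subst hi
    exact (if_pos rfl).trans (M.opener_eq_zero _ (by simp)).symm
  · rw [eraseLast_opener _ hi, insertLast_opener_last, insertLast_opener _ _ hi,
      shiftDown_shiftUp]
  · subst hi
    exact (if_pos rfl).trans (M.closer_eq_zero _ (by simp)).symm
  · rw [eraseLast_closer _ hi, insertLast_opener_last, insertLast_closer _ _ hi,
      shiftDown_shiftUp]

end insertLast

lemma insertLast_eraseLast (M : Matching (n + 1)) :
    M.eraseLast.insertLast (M.opener (n + 1)) M.opener_last_mem = M := by
  ext i <;> by_cases hi : i = n + 1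
  · subst hi
    exact insertLast_opener_last _ _
  · rw [insertLast_opener _ _ hi, eraseLast_opener _ hi,
      shiftUp_shiftDown (M.opener_ne_opener_last hi)]
  · subst hi
    rw [insertLast_closer_last, closer_last]
  · rw [insertLast_closer _ _ hi, eraseLast_closer _ hi,
      shiftUp_shiftDown (M.closer_ne_opener_last i)]

/-- The openers for a new last arc that avoid left nestings: just before the closer of
arc `s`, or `2n + 1` for `s = n + 1` (and, as a junk value, for every `s ∉ [1, n]`). -/
def slotPos (M : Matching n) (s : ℕ) : ℕ :=
  if 1 ≤ s ∧ s ≤ n then M.closer s else 2 * n + 1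

lemma slotPos_mem (M : Matching n) (s : ℕ) : M.slotPos s ∈ Set.Icc 1 (2 * n + 1) := by
  unfold slotPos
  split_ifs with hs
  · have := M.closer_mem s hs.1 hs.2
    exact ⟨this.1, this.2.trans (by omega)⟩
  · exact ⟨by omega, le_rfl⟩

lemma opener_ne_slotPos (M : Matching n) (s i : ℕ) : M.opener i ≠ M.slotPos s := by
  unfold slotPos
  split_ifs with hs
  · by_cases hi : i ∈ Set.Icc 1 n
    · exact M.opener_ne_closer i s hi.1 hi.2 hs.1 hs.2
    · rw [M.opener_eq_zero i hi]
      exact (M.closer_mem s hs.1 hs.2).1.trans_lt' zero_lt_one |>.ne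
  · have := M.opener_le i
    omega

lemma slotPos_injOn (M : Matching n) : Set.InjOn M.slotPos (Set.Icc 1 (n + 1)) := by
  intro s hs t ht h
  unfold slotPos at h
  split_ifs at h with hs' ht' ht'
  · exact M.closer_strictMonoOn.injOn hs' ht' h
  · have := (M.closer_mem s hs'.1 hs'.2).2
    omega
  · have := (M.closer_mem t ht'.1 ht'.2).2
    omega
  · obtain ⟨hs1, hs2⟩ := hs
    obtain ⟨ht1, ht2⟩ := ht
    omega

namespace NoLeftNesting

lemma opener_ne_opener_last_add_one {M : Matching (n + 1)} (hM : M.NoLeftNesting) (i : ℕ) :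
    M.opener i ≠ M.opener (n + 1) + 1 := by
  by_cases hi : i = n + 1
  · subst hi
    omega
  by_cases hi' : i ∈ Set.Icc 1 (n + 1)
  · intro h
    refine hM i (n + 1) hi'.1 hi'.2 (by omega) le_rfl ⟨h, ?_⟩
    rw [closer_last]
    exact M.closer_lt_of_ne_last hi
  · rw [M.opener_eq_zero i hi']
    omega

lemma eraseLast {M : Matching (n + 1)} (hM : M.NoLeftNesting) : M.eraseLast.NoLeftNesting := by
  rintro i j hi1 hi2 hj1 hj2 ⟨ho, hc⟩
  rw [eraseLast_opener _ (by omega), eraseLast_opener _ (by omega)] at ho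
  rw [eraseLast_closer _ (by omega), eraseLast_closer _ (by omega),
    shiftDown_lt_shiftDown_iff (M.closer_ne_opener_last i) (M.closer_ne_opener_last j)] at hc
  have hi := M.opener_ne_opener_last (i := i) (by omega)
  have hj := M.opener_ne_opener_last (i := j) (by omega)
  have hi' := hM.opener_ne_opener_last_add_one i
  refine hM i j hi1 (by omega) hj1 (by omega) ⟨?_, hc⟩
  unfold shiftDown at ho
  split_ifs at ho <;> omega

/-- The old point `p` ends up right after the new opener, so `hpo` says that the new
arc cannot be left-nested. -/
lemma insertLast {M : Matching n} (hM : M.NoLeftNesting) {p : ℕ}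
    (hp : p ∈ Set.Icc 1 (2 * n + 1)) (hpo : ∀ i, M.opener i ≠ p) :
    (M.insertLast p hp).NoLeftNesting := by
  rintro i j hi1 hi2 hj1 hj2 ⟨ho, hc⟩
  rcases eq_or_ne i (n + 1) with rfl | hi
  · have hj : j ≠ n + 1 := by
      rintro rfl
      exact lt_irrefl _ hc
    have := (M.insertLast p hp).closer_lt_of_ne_last hj
    rw [closer_last] at hc
    omega
  rcases eq_or_ne j (n + 1) with rfl | hj
  · rw [insertLast_opener _ _ hi, insertLast_opener_last] at ho
    refine hpo i ?_
    unfold shiftUp at ho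
    split_ifs at ho <;> omega
  rw [insertLast_opener _ _ hi, insertLast_opener _ _ hj] at ho
  rw [insertLast_closer _ _ hi, insertLast_closer _ _ hj,
    (shiftUp_strictMono p).lt_iff_lt] at hc
  refine hM i j hi1 (by omega) hj1 (by omega) ⟨?_, hc⟩
  unfold shiftUp at ho
  split_ifs at ho <;> omega

lemma exists_slotPos_eraseLast {M : Matching (n + 1)} (hM : M.NoLeftNesting) :
    ∃ s ∈ Set.Icc 1 (n + 1), M.eraseLast.slotPos s = M.opener (n + 1) := by
  have hp := M.opener_last_mem
  rcases hp.2.eq_or_lt with hlast | hlt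
  · exact ⟨n + 1, ⟨by omega, le_rfl⟩, by rw [slotPos, if_neg (by omega), hlast]⟩
  obtain ⟨i, hi1, hi2, h⟩ := M.cover (M.opener (n + 1) + 1) ⟨by omega, by omega⟩
  have hc : M.closer i = M.opener (n + 1) + 1 :=
    h.resolve_left (hM.opener_ne_opener_last_add_one i)
  have hin : i ≠ n + 1 := by
    rintro rfl
    rw [closer_last] at hc
    omega
  refine ⟨i, ⟨hi1, hi2⟩, ?_⟩
  rw [slotPos, if_pos ⟨hi1, by omega⟩, eraseLast_closer _ hin, hc, shiftDown, if_pos (by omega)]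
  rfl

end NoLeftNesting

lemma bijOn_insertLast_slotPos :
    Set.BijOn (fun x : Matching n × ℕ => x.1.insertLast (x.1.slotPos x.2) (x.1.slotPos_mem x.2))
      ({M | M.NoLeftNesting} ×ˢ Set.Icc 1 (n + 1)) {M | M.NoLeftNesting} := by
  refine ⟨fun x hx => hx.1.insertLast _ (x.1.opener_ne_slotPos x.2), ?_, ?_⟩
  · rintro ⟨M₁, s₁⟩ ⟨-, hs₁⟩ ⟨M₂, s₂⟩ ⟨-, hs₂⟩ h
    obtain rfl : M₁ = M₂ := by
      simpa only [eraseLast_insertLast] using congrArg eraseLast h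
    have hpos := congrArg (fun M => M.opener (n + 1)) h
    simp only [insertLast_opener_last] at hpos
    exact congrArg (Prod.mk M₁) (M₁.slotPos_injOn hs₁ hs₂ hpos)
  · intro M hM
    obtain ⟨s, hs, hsM⟩ := NoLeftNesting.exists_slotPos_eraseLast hM
    refine ⟨(M.eraseLast, s), ⟨NoLeftNesting.eraseLast hM, hs⟩, ?_⟩
    convert M.insertLast_eraseLast using 2

lemma ncard_noLeftNesting_succ :
    Set.ncard {M : Matching (n + 1) | M.NoLeftNesting} =
      (n + 1) * Set.ncard {M : Matching n | M.NoLeftNesting} := by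
  rw [← bijOn_insertLast_slotPos.ncard_eq, Set.ncard_prod, Set.ncard_Icc_nat, Nat.mul_comm,
    Nat.add_sub_cancel]

instance : Unique (Matching 0) where
  default :=
    { opener := fun _ => 0
      closer := fun _ => 0
      opener_lt_closer := by intros; omega
      closer_mono := by intros; omega
      opener_mem := by intros; omega
      closer_mem := by intros; omega
      opener_inj := by intros; omega
      opener_ne_closer := by intros; omega
      cover := by
        rintro m ⟨h1, h2⟩
        omega
      opener_eq_zero := fun _ _ => rfl
      closer_eq_zero := fun _ _ => rfl }
  uniq M := by
    ext i
    · exact M.opener_eq_zero i (by simp only [Set.mem_Icc]; omega)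
    · exact M.closer_eq_zero i (by simp only [Set.mem_Icc]; omega)

lemma ncard_noLeftNesting_zero : Set.ncard {M : Matching 0 | M.NoLeftNesting} = 1 := by
  rw [Set.ncard_eq_one]
  refine ⟨default, Set.eq_singleton_iff_unique_mem.2 ⟨?_, fun M _ => Subsingleton.elim _ _⟩⟩
  intro i j hi1 hi2
  omega

end Matching

theorem card_noLeftNesting_matchings_general (n : ℕ) :
    Set.ncard {M : Matching n | M.NoLeftNesting} = Nat.factorial n := by
  induction n with
  | zero => exact Matching.ncard_noLeftNesting_zero
  | succ n ih => rw [Matching.ncard_noLeftNesting_succ, ih, Nat.factorial_succ]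

/-- For every positive integer `n`, the number of matchings of
size `n` with no left nesting equals `n!`. -/
theorem card_noLeftNesting_matchings (n : ℕ) (hn : 1 ≤ n) :
    Set.ncard {M : Matching n | M.NoLeftNesting} = Nat.factorial n :=
  card_noLeftNesting_matchings_general n
end

section
/- There is a bijection f from the set of flat column-strict fillings to the set of marked matchings (pairs (M,X) with M a matching of some size n ≥ 1 with no left nesting and X ⊆ Radj(M)) such that, whenever f(T) = (M,X): n(T) = n(M); Min(T) = Min(M); X(T) = X; Des(T) ∩ X(T) = Rne(M) ∩ X; Asc(T) ∩ X(T) = Rcr'(M) ∩ X; Rep(T) ∩ X(T) = LRcr(M) ∩ X; moreover f(T ⊕ T') = f(T) ⊕ f(T'), where the direct sum of marked matchings places the two matchings side by side (shifting all elements of M' by 2n(M)) and takes the union of the mark sets with X' shifted by n(M). -/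
/-!
A flat column-strict filling is encoded by its lazy set `X` and the rows `row i` of its dots:
flatness says that the column heights start at `1` and grow by one exactly at the columns outside
`X`, and the only constraint on the dots is `1 ≤ row i ≤ height i`.

From such a code we read off a matching as the word `O₁ C₁ O₂ C₂ ⋯`, where `Cᵥ` lists the closers
of the columns of height `v` and `Oᵥ` the openers of the arcs whose dot lies in row `v`, both in
increasing order of the column. A lazy column has the height of its predecessor, so the two
closers are adjacent, which gives `X ⊆ Radj`; openers within `Oᵥ` are sorted by their closers,
which rules out left nestings. Conversely, in a matching without left nestings the closers along a
run of consecutive openers increase, so the row of a dot is recovered as one plus the number of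
blocks of closers (maximal runs of marked adjacencies) preceding its opener.

At a lazy column `i` the arcs `i - 1` and `i` have adjacent closers, and their openers compare as
the rows of the dots: a descent gives a right nesting, an ascent a single right crossing and a
repetition adjacent openers, a double crossing. In a direct sum the dots of the second filling
lie above every column of the first, so its arcs follow all arcs of the first.
-/

section Counting

open Classical in
noncomputable def countIcc (n : ℕ) (P : ℕ → Prop) : ℕ := ((Finset.Icc 1 n).filter P).card

variable {n m : ℕ} {P Q : ℕ → Prop}

theorem countIcc_eq_card_filter [DecidablePred P] :
    countIcc n P = ((Finset.Icc 1 n).filter P).card := by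
  unfold countIcc
  congr

theorem mem_filter_Icc [DecidablePred P] {j : ℕ} :
    j ∈ (Finset.Icc 1 n).filter P ↔ (1 ≤ j ∧ j ≤ n) ∧ P j := by
  rw [Finset.mem_filter, Finset.mem_Icc]

theorem countIcc_le_countIcc (h : ∀ j, 1 ≤ j → j ≤ n → P j → Q j) :
    countIcc n P ≤ countIcc n Q := by
  classical
  rw [countIcc_eq_card_filter, countIcc_eq_card_filter]
  refine Finset.card_le_card fun j hj => ?_
  rw [mem_filter_Icc] at hj ⊢
  exact ⟨hj.1, h j hj.1.1 hj.1.2 hj.2⟩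

theorem countIcc_congr (h : ∀ j, 1 ≤ j → j ≤ n → (P j ↔ Q j)) :
    countIcc n P = countIcc n Q :=
  (countIcc_le_countIcc fun j h1 h2 => (h j h1 h2).1).antisymm
    (countIcc_le_countIcc fun j h1 h2 => (h j h1 h2).2)

theorem countIcc_lt_countIcc (h : ∀ j, 1 ≤ j → j ≤ n → P j → Q j) {j₀ : ℕ}
    (h1 : 1 ≤ j₀) (h2 : j₀ ≤ n) (hq : Q j₀) (hp : ¬ P j₀) : countIcc n P < countIcc n Q := by
  classical
  rw [countIcc_eq_card_filter, countIcc_eq_card_filter]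
  refine Finset.card_lt_card ((Finset.ssubset_iff_of_subset fun j hj => ?_).2
    ⟨j₀, mem_filter_Icc.2 ⟨⟨h1, h2⟩, hq⟩, fun hc => hp (mem_filter_Icc.1 hc).2⟩)
  rw [mem_filter_Icc] at hj ⊢
  exact ⟨hj.1, h j hj.1.1 hj.1.2 hj.2⟩

theorem countIcc_eq_ncard : countIcc n P = Set.ncard {j | 1 ≤ j ∧ j ≤ n ∧ P j} := by
  classical
  rw [countIcc_eq_card_filter, ← Set.ncard_coe_finset]
  congr 1
  ext j
  simp only [Finset.coe_filter, Finset.mem_Icc, Set.mem_ofPred_eq, and_assoc]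

theorem countIcc_eq_of_iff_le {a : ℕ} (ha : a ≤ n)
    (h : ∀ j, 1 ≤ j → j ≤ n → (P j ↔ j ≤ a)) :
    countIcc n P = a := by
  classical
  have : (Finset.Icc 1 n).filter P = Finset.Icc 1 a := by
    ext j
    rw [mem_filter_Icc, Finset.mem_Icc]
    constructor
    · exact fun hj => ⟨hj.1.1, (h j hj.1.1 hj.1.2).1 hj.2⟩
    · exact fun hj => ⟨⟨hj.1, hj.2.trans ha⟩, (h j hj.1 (hj.2.trans ha)).2 hj.2⟩
  rw [countIcc_eq_card_filter, this, Nat.card_Icc, Nat.add_sub_cancel]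

theorem countIcc_eq_zero (h : ∀ j, 1 ≤ j → j ≤ n → ¬ P j) : countIcc n P = 0 :=
  countIcc_eq_of_iff_le (Nat.zero_le n) fun j h1 h2 => by simp only [h j h1 h2, false_iff]; omega

theorem countIcc_eq_self (h : ∀ j, 1 ≤ j → j ≤ n → P j) : countIcc n P = n :=
  countIcc_eq_of_iff_le le_rfl fun j h1 h2 => by simp only [h j h1 h2, h2]

theorem countIcc_add_countIcc_not (n : ℕ) (P : ℕ → Prop) :
    countIcc n P + countIcc n (¬ P ·) = n := by
  classical
  rw [countIcc_eq_card_filter, countIcc_eq_card_filter, Finset.card_filter_add_card_filter_not,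
    Nat.card_Icc, Nat.add_sub_cancel]

theorem countIcc_le (n : ℕ) (P : ℕ → Prop) : countIcc n P ≤ n :=
  (countIcc_le_countIcc (Q := fun _ => True) fun _ _ _ _ => trivial).trans_eq
    (countIcc_eq_self fun _ _ _ => trivial)

theorem countIcc_le_of_lt (h : ∀ j, 1 ≤ j → j ≤ n → P j → j < m) :
    countIcc n P ≤ m - 1 :=
  calc countIcc n P ≤ countIcc n (· ≤ min n (m - 1)) :=
        countIcc_le_countIcc fun j _ h2 hj => le_min h2 (by have := h j ‹_› h2 hj; omega)
    _ ≤ m - 1 := (countIcc_eq_of_iff_le (min_le_left _ _) fun _ _ _ => Iff.rfl).trans_le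
        (min_le_right _ _)

theorem countIcc_succ (n : ℕ) (P : ℕ → Prop) [Decidable (P (n + 1))] :
    countIcc (n + 1) P = countIcc n P + if P (n + 1) then 1 else 0 := by
  classical
  rw [countIcc_eq_card_filter, countIcc_eq_card_filter,
    ← Finset.insert_Icc_right_eq_Icc_add_one (by omega),
    Finset.filter_insert]
  split_ifs with hp
  · rw [Finset.card_insert_of_notMem (by simp)]
  · rfl

theorem countIcc_add (n m : ℕ) (P : ℕ → Prop) :
    countIcc (n + m) P = countIcc n P + countIcc m (fun j => P (n + j)) := by
  classical
  induction m with
  | zero => simp [countIcc]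
  | succ k ih =>
    rw [← Nat.add_assoc, countIcc_succ, ih, countIcc_succ, Nat.add_assoc, Nat.add_assoc n k 1]

theorem countIcc_le_countIcc_of_injOn (f : ℕ → ℕ)
    (hf : ∀ j, 1 ≤ j → j ≤ n → P j → (1 ≤ f j ∧ f j ≤ m) ∧ Q (f j))
    (hinj : ∀ j j', 1 ≤ j → j ≤ n → P j → 1 ≤ j' → j' ≤ n → P j' → f j = f j' → j = j') :
    countIcc n P ≤ countIcc m Q := by
  classical
  rw [countIcc_eq_card_filter, countIcc_eq_card_filter]
  refine Finset.card_le_card_of_injOn f (fun j hj => ?_) fun j hj j' hj' he => ?_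
  · rw [Finset.mem_coe, mem_filter_Icc] at hj ⊢
    exact hf j hj.1.1 hj.1.2 hj.2
  · rw [Finset.mem_coe, mem_filter_Icc] at hj hj'
    exact hinj j j' hj.1.1 hj.1.2 hj.2 hj'.1.1 hj'.1.2 hj'.2 he

end Counting

section LazyShape

/-- The column heights of the flat shape whose lazy set is `X`. -/
noncomputable def lazyShape (X : Set ℕ) (i : ℕ) : ℕ := countIcc i (· ∉ X)

variable {X : Set ℕ} {i j v m : ℕ}

theorem lazyShape_zero (X : Set ℕ) : lazyShape X 0 = 0 :=
  countIcc_eq_zero fun _ _ _ => by omega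

theorem lazyShape_succ_of_mem (h : i + 1 ∈ X) : lazyShape X (i + 1) = lazyShape X i := by
  classical
  rw [lazyShape, countIcc_succ, if_neg (not_not.2 h), Nat.add_zero]
  rfl

theorem lazyShape_succ_of_notMem (h : i + 1 ∉ X) : lazyShape X (i + 1) = lazyShape X i + 1 := by
  classical
  rw [lazyShape, countIcc_succ, if_pos h]
  rfl

theorem lazyShape_pred_eq_iff (hi : 1 ≤ i) : lazyShape X (i - 1) = lazyShape X i ↔ i ∈ X := by
  obtain ⟨k, rfl⟩ := Nat.exists_eq_add_of_le' hi
  by_cases h : k + 1 ∈ X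
  · simp only [Nat.add_sub_cancel, lazyShape_succ_of_mem h, h]
  · simp only [Nat.add_sub_cancel, lazyShape_succ_of_notMem h, h, iff_false]
    omega

theorem eq_of_lazyShape_eq {Y : Set ℕ} {n : ℕ} (hX : X ⊆ Set.Icc 1 n) (hY : Y ⊆ Set.Icc 1 n)
    (h : ∀ i ≤ n, lazyShape X i = lazyShape Y i) : X = Y := by
  ext i
  by_cases hi : 1 ≤ i ∧ i ≤ n
  · rw [← lazyShape_pred_eq_iff hi.1, ← lazyShape_pred_eq_iff hi.1, h i hi.2,
      h (i - 1) (by omega)]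
  · exact iff_of_false (fun h => hi (hX h)) fun h => hi (hY h)

theorem lazyShape_succ_le (X : Set ℕ) (i : ℕ) : lazyShape X (i + 1) ≤ lazyShape X i + 1 := by
  by_cases h : i + 1 ∈ X
  · rw [lazyShape_succ_of_mem h]; omega
  · rw [lazyShape_succ_of_notMem h]

theorem lazyShape_mono (X : Set ℕ) : Monotone (lazyShape X) :=
  monotone_nat_of_le_succ fun i => by
    by_cases h : i + 1 ∈ X
    · rw [lazyShape_succ_of_mem h]
    · rw [lazyShape_succ_of_notMem h]; omega

theorem lazyShape_one (h1 : 1 ∉ X) : lazyShape X 1 = 1 := by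
  rw [← zero_add 1, lazyShape_succ_of_notMem h1, lazyShape_zero]

theorem one_le_lazyShape (h1 : 1 ∉ X) (hi : 1 ≤ i) : 1 ≤ lazyShape X i :=
  (lazyShape_one h1).symm.le.trans (lazyShape_mono X hi)

theorem lt_of_lazyShape_lt (h : lazyShape X i < lazyShape X j) : i < j :=
  lt_of_not_ge fun hji => (lazyShape_mono X hji).not_gt h

theorem eq_of_lazyShape_eq_of_succ_notMem (hj : j + 1 ∉ X) (hj' : i + 1 ∉ X)
    (h : lazyShape X j = lazyShape X i) : j = i := by
  by_contra hne
  rcases Nat.lt_or_gt_of_ne hne with hlt | hlt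
  · have := lazyShape_mono X (show j + 1 ≤ i by omega)
    rw [lazyShape_succ_of_notMem hj] at this
    omega
  · have := lazyShape_mono X (show i + 1 ≤ j by omega)
    rw [lazyShape_succ_of_notMem hj'] at this
    omega

theorem exists_lazyShape_eq_of_lt (hv : 1 ≤ v) (hvm : v < lazyShape X m) :
    ∃ j, 1 ≤ j ∧ j ≤ m ∧ lazyShape X j = v ∧ j + 1 ∉ X := by
  classical
  have hex : ∃ k, v < lazyShape X k := ⟨m, hvm⟩
  obtain ⟨j, hjk⟩ : ∃ j, Nat.find hex = j + 1 := Nat.exists_eq_add_one_of_ne_zero fun h0 => by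
    have := Nat.find_spec hex
    rw [h0, lazyShape_zero] at this
    omega
  have hk : v < lazyShape X (j + 1) := hjk ▸ Nat.find_spec hex
  have hkm : j + 1 ≤ m := hjk ▸ Nat.find_min' hex hvm
  have hj : lazyShape X j ≤ v := not_lt.1 (Nat.find_min hex (by omega))
  have hstep := lazyShape_succ_le X j
  have hjX : j + 1 ∉ X := fun hX => by rw [lazyShape_succ_of_mem hX] at hk; omega
  have hjv : lazyShape X j = v := by rw [lazyShape_succ_of_notMem hjX] at hk; omega
  refine ⟨j, Nat.pos_of_ne_zero fun h0 => ?_, by omega, hjv, hjX⟩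
  rw [h0, lazyShape_zero] at hjv
  omega

theorem exists_lazyShape_eq (hv : 1 ≤ v) (hvm : v ≤ lazyShape X m) :
    ∃ j, 1 ≤ j ∧ j ≤ m ∧ lazyShape X j = v := by
  rcases hvm.lt_or_eq with hlt | rfl
  · obtain ⟨j, hj⟩ := exists_lazyShape_eq_of_lt hv hlt
    exact ⟨j, hj.1, hj.2.1, hj.2.2.1⟩
  · refine ⟨m, Nat.pos_of_ne_zero fun h0 => ?_, le_rfl, rfl⟩
    rw [h0, lazyShape_zero] at hv
    omega

theorem lazyShape_eq_countIcc_add_one (h1 : 1 ∉ X) (hj : 1 ≤ j) :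
    lazyShape X j = countIcc j (fun v => v ∉ X ∧ 2 ≤ v) + 1 := by
  obtain ⟨k, rfl⟩ := Nat.exists_eq_add_of_le hj
  have hfirst : countIcc 1 (· ∉ X) = 1 :=
    countIcc_eq_self fun v hv1 hv2 => by rwa [show v = 1 by omega]
  have hrest :
      countIcc k (fun v => 1 + v ∉ X ∧ 2 ≤ 1 + v) = countIcc k (fun v => 1 + v ∉ X) :=
    countIcc_congr fun v hv1 _ => by simp only [and_iff_left_iff_imp]; omega
  rw [lazyShape, countIcc_add, countIcc_add, hfirst, hrest,
    countIcc_eq_zero (n := 1) fun v _ hv2 h => by omega]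
  omega

/-- Each height `≤ t < lazyShape X n` is the height of exactly one column `j ≤ n` ending a block
of equal heights. -/
theorem countIcc_blockEnd (h1 : 1 ∉ X) {n t : ℕ} (ht : t < lazyShape X n) :
    countIcc n (fun j => lazyShape X j ≤ t ∧ j + 1 ∉ X) = t := by
  have hle :
      countIcc n (fun j => lazyShape X j ≤ t ∧ j + 1 ∉ X) ≤ countIcc t (fun _ => True) := by
    exact countIcc_le_countIcc_of_injOn (lazyShape X)
      (fun j hj _ hP => ⟨⟨one_le_lazyShape h1 hj, hP.1⟩, trivial⟩)
      fun _ _ _ _ hP _ _ hP' he => eq_of_lazyShape_eq_of_succ_notMem hP.2 hP'.2 he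
  have hge :
      countIcc t (fun _ => True) ≤ countIcc n (fun j => lazyShape X j ≤ t ∧ j + 1 ∉ X) := by
    classical
    refine countIcc_le_countIcc_of_injOn
      (fun v => if h : 1 ≤ v ∧ v ≤ t then
        (exists_lazyShape_eq_of_lt h.1 (h.2.trans_lt ht)).choose else 0)
      (fun v hv1 hv2 _ => ?_) fun v v' hv1 hv2 _ hv1' hv2' _ he => ?_
    · have := (exists_lazyShape_eq_of_lt hv1 (hv2.trans_lt ht)).choose_spec
      simp only [dif_pos (And.intro hv1 hv2)]
      exact ⟨⟨this.1, this.2.1⟩, by omega, this.2.2.2⟩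
    · have hs := (exists_lazyShape_eq_of_lt hv1 (hv2.trans_lt ht)).choose_spec.2.2.1
      have hs' := (exists_lazyShape_eq_of_lt hv1' (hv2'.trans_lt ht)).choose_spec.2.2.1
      simp only [dif_pos (And.intro hv1 hv2), dif_pos (And.intro hv1' hv2')] at he
      rw [← hs, ← hs', he]
  exact (hle.antisymm hge).trans (countIcc_eq_self fun _ _ _ => trivial)

end LazyShape

namespace Matching

variable {n : ℕ} (M : Matching n) {i j : ℕ}

theorem closer_lt_closer_iff (hi1 : 1 ≤ i) (hi2 : i ≤ n) (hj1 : 1 ≤ j) (hj2 : j ≤ n) :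
    M.closer i < M.closer j ↔ i < j := by
  refine ⟨fun h => lt_of_not_ge fun hji => ?_, fun h => M.closer_mono i j hi1 h hj2⟩
  rcases hji.lt_or_eq with hlt | rfl
  · exact (M.closer_mono j i hj1 hlt hi2).not_gt h
  · exact h.false

theorem closer_le_closer (hi1 : 1 ≤ i) (hj2 : j ≤ n) (h : i ≤ j) :
    M.closer i ≤ M.closer j := by
  rcases h.lt_or_eq with h | rfl
  · exact (M.closer_mono i j hi1 h hj2).le
  · exact le_rfl

theorem closer_inj (hi1 : 1 ≤ i) (hi2 : i ≤ n) (hj1 : 1 ≤ j) (hj2 : j ≤ n)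
    (h : M.closer i = M.closer j) : i = j := by
  have := M.closer_lt_closer_iff hi1 hi2 hj1 hj2
  have := M.closer_lt_closer_iff hj1 hj2 hi1 hi2
  omega

/-- The positions below `p` are exactly the endpoints below `p`. -/
theorem countIcc_closer_lt_add_countIcc_opener_lt {p : ℕ} (hp : p ≤ 2 * n + 1) :
    countIcc n (fun j => M.closer j < p) + countIcc n (fun j => M.opener j < p) = p - 1 := by
  classical
  have hsets : ((Finset.Icc 1 n).filter (fun j => M.closer j < p)).image M.closer ∪
      ((Finset.Icc 1 n).filter (fun j => M.opener j < p)).image M.opener =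
        Finset.Icc 1 (p - 1) := by
    ext q
    simp only [Finset.mem_union, Finset.mem_image, mem_filter_Icc, Finset.mem_Icc]
    constructor
    · rintro (⟨i, ⟨⟨hi1, hi2⟩, hp⟩, rfl⟩ | ⟨i, ⟨⟨hi1, hi2⟩, hp⟩, rfl⟩)
      · exact ⟨(M.closer_mem i hi1 hi2).1, by omega⟩
      · exact ⟨(M.opener_mem i hi1 hi2).1, by omega⟩
    · rintro ⟨hq1, hq2⟩
      obtain ⟨i, hi1, hi2, rfl | rfl⟩ := M.cover q ⟨hq1, by omega⟩
      · exact Or.inr ⟨i, ⟨⟨hi1, hi2⟩, by omega⟩, rfl⟩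
      · exact Or.inl ⟨i, ⟨⟨hi1, hi2⟩, by omega⟩, rfl⟩
  have hcard := congrArg Finset.card hsets
  rw [Finset.card_union_of_disjoint, Finset.card_image_of_injOn, Finset.card_image_of_injOn,
    Nat.card_Icc] at hcard
  · rw [countIcc_eq_card_filter, countIcc_eq_card_filter]
    omega
  · intro a ha b hb he
    rw [Finset.mem_coe, mem_filter_Icc] at ha hb
    exact M.opener_inj a b ha.1.1 ha.1.2 hb.1.1 hb.1.2 he
  · intro a ha b hb he
    rw [Finset.mem_coe, mem_filter_Icc] at ha hb
    exact M.closer_inj ha.1.1 ha.1.2 hb.1.1 hb.1.2 he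
  · rw [Finset.disjoint_left]
    rintro q hq hq'
    obtain ⟨a, ha, rfl⟩ := Finset.mem_image.mp hq
    obtain ⟨b, hb, he⟩ := Finset.mem_image.mp hq'
    rw [mem_filter_Icc] at ha hb
    exact M.opener_ne_closer b a hb.1.1 hb.1.2 ha.1.1 ha.1.2 he

/-- Without left nestings, the closers along a run of consecutive openers increase. -/
theorem NoLeftNesting.closer_lt_closer {M : Matching n} (hM : M.NoLeftNesting)
    (hi1 : 1 ≤ i) (hi2 : i ≤ n) (hj1 : 1 ≤ j) (hj2 : j ≤ n) (hop : M.opener j < M.opener i)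
    (hrun : ∀ l, 1 ≤ l → l ≤ n → ¬(M.opener j < M.closer l ∧ M.closer l < M.opener i)) :
    M.closer j < M.closer i := by
  obtain ⟨-, hopi⟩ := M.opener_mem i hi1 hi2
  have hstep : ∀ k, k ≤ M.opener i - M.opener j →
      ∃ l, 1 ≤ l ∧ l ≤ n ∧ M.opener l = M.opener j + k ∧ M.closer j ≤ M.closer l := by
    intro k
    induction k with
    | zero => exact fun _ => ⟨j, hj1, hj2, rfl, le_rfl⟩
    | succ k ih =>
      intro hk
      obtain ⟨l, hl1, hl2, hlop, hlcl⟩ := ih (by omega)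
      obtain ⟨l', hl'1, hl'2, hl' | hl'⟩ :=
        M.cover (M.opener j + k + 1) ⟨by omega, by omega⟩
      · have hle : M.closer l ≤ M.closer l' :=
          not_lt.1 fun h => hM l' l hl'1 hl'2 hl1 hl2 ⟨by omega, h⟩
        exact ⟨l', hl'1, hl'2, hl', hlcl.trans hle⟩
      · rcases (show M.opener j + k + 1 < M.opener i ∨ M.opener j + k + 1 = M.opener i by omega)
          with hlt | heq
        · exact absurd ⟨by omega, by omega⟩ (hrun l' hl'1 hl'2)
        · exact absurd (by omega) (M.opener_ne_closer i l' hi1 hi2 hl'1 hl'2)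
  obtain ⟨l, hl1, hl2, hlop, hlcl⟩ := hstep (M.opener i - M.opener j) le_rfl
  obtain rfl : l = i := M.opener_inj l i hl1 hl2 hi1 hi2 (by omega)
  have hne : j ≠ l := by rintro rfl; omega
  exact hlcl.lt_of_ne fun h => hne (M.closer_inj hj1 hj2 hl1 hl2 h)

end Matching

/-- The code of a flat column-strict filling with `n` columns: its lazy set `X`, which fixes the
column heights `lazyShape X`, and the row `row i` of the dot in each column `i`. -/
@[ext]
structure FlatCode where
  n : ℕ
  X : Set ℕ
  row : ℕ → ℕ
  one_le_n : 1 ≤ n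
  X_subset : X ⊆ Set.Icc 2 n
  one_le_row : ∀ i, 1 ≤ i → i ≤ n → 1 ≤ row i
  row_le_lazyShape : ∀ i, 1 ≤ i → i ≤ n → row i ≤ lazyShape X i
  row_eq_zero : ∀ i, i ∉ Set.Icc 1 n → row i = 0

namespace FlatCode

variable (d : FlatCode) {i j l : ℕ}

theorem one_notMem_X : 1 ∉ d.X := fun h => by have := d.X_subset h; simp at this

theorem mem_X_bounds (h : i ∈ d.X) : 2 ≤ i ∧ i ≤ d.n := d.X_subset h

theorem row_le_lazyShape_n (hi1 : 1 ≤ i) (hi2 : i ≤ d.n) : d.row i ≤ lazyShape d.X d.n :=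
  (d.row_le_lazyShape i hi1 hi2).trans (lazyShape_mono d.X hi2)

theorem lazyShape_of_mem_X (h : i ∈ d.X) : lazyShape d.X i = lazyShape d.X (i - 1) := by
  obtain ⟨k, rfl⟩ : ∃ k, i = k + 1 := ⟨i - 1, by have := d.mem_X_bounds h; omega⟩
  exact lazyShape_succ_of_mem h

def lexKey (i : ℕ) : ℕ ×ₗ ℕ := toLex (d.row i, i)

theorem lexKey_lt_lexKey :
    d.lexKey j < d.lexKey i ↔ d.row j < d.row i ∨ d.row j = d.row i ∧ j < i :=
  Prod.Lex.toLex_lt_toLex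

theorem lexKey_injective : Function.Injective d.lexKey := fun _ _ h =>
  congrArg Prod.snd (toLex.injective h)

noncomputable def lexRank (i : ℕ) : ℕ := countIcc d.n (fun j => d.lexKey j < d.lexKey i)

theorem lexRank_lt_lexRank (hi1 : 1 ≤ i) (hi2 : i ≤ d.n) (h : d.lexKey i < d.lexKey j) :
    d.lexRank i < d.lexRank j :=
  countIcc_lt_countIcc (fun _ _ _ hl => hl.trans h) hi1 hi2 h (lt_irrefl _)

theorem countIcc_row_lt_le_lexRank : countIcc d.n (fun j => d.row j < d.row i) ≤ d.lexRank i :=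
  countIcc_le_countIcc fun _ _ _ h => d.lexKey_lt_lexKey.2 (Or.inl h)

theorem lexRank_lt_countIcc_row_le (hi1 : 1 ≤ i) (hi2 : i ≤ d.n) :
    d.lexRank i < countIcc d.n (fun j => d.row j ≤ d.row i) := by
  refine countIcc_lt_countIcc (fun j _ _ h => ?_) hi1 hi2 le_rfl (lt_irrefl _)
  rcases d.lexKey_lt_lexKey.1 h with h | h
  exacts [h.le, h.1.le]

theorem lexRank_eq_of_row_eq (hi1 : 2 ≤ i) (hi2 : i ≤ d.n) (h : d.row i = d.row (i - 1)) :
    d.lexRank i = d.lexRank (i - 1) + 1 := by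
  classical
  have hcongr :
      d.lexRank i = countIcc d.n (fun j => d.lexKey j < d.lexKey (i - 1) ∨ j = i - 1) := by
    refine countIcc_congr fun j _ _ => ?_
    rcases eq_or_ne j (i - 1) with rfl | hj
    · simp only [lexKey_lt_lexKey, h, lt_irrefl, true_and, false_or, or_true, iff_true]
      omega
    · simp only [lexKey_lt_lexKey, h, hj, or_false]
      omega
  rw [hcongr, lexRank, countIcc_eq_card_filter, countIcc_eq_card_filter, Finset.filter_or,
    Finset.card_union_of_disjoint, Finset.filter_eq' _ (i - 1), if_pos (by simp; omega),
    Finset.card_singleton]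
  exact Finset.disjoint_filter.2 fun j _ hj hji => (hji ▸ hj).false

/-- The arcs of the matching of `d` read `O₁ C₁ O₂ C₂ …`, where `Oᵥ` are the openers of the arcs
`i` with `row i = v`, in increasing order of `i`, and `Cᵥ` the closers of the columns of height
`v`. -/
noncomputable def opener (i : ℕ) : ℕ :=
  if 1 ≤ i ∧ i ≤ d.n then 1 + countIcc d.n (fun j => lazyShape d.X j < d.row i) + d.lexRank i
  else 0

noncomputable def closer (i : ℕ) : ℕ :=
  if 1 ≤ i ∧ i ≤ d.n then i + countIcc d.n (fun j => d.row j ≤ lazyShape d.X i) else 0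

theorem opener_eq (h1 : 1 ≤ i) (h2 : i ≤ d.n) :
    d.opener i = 1 + countIcc d.n (fun j => lazyShape d.X j < d.row i) + d.lexRank i :=
  if_pos ⟨h1, h2⟩

theorem closer_eq (h1 : 1 ≤ i) (h2 : i ≤ d.n) :
    d.closer i = i + countIcc d.n (fun j => d.row j ≤ lazyShape d.X i) :=
  if_pos ⟨h1, h2⟩

theorem opener_lt_closer_of_row_le (hl1 : 1 ≤ l) (hl2 : l ≤ d.n) (hj1 : 1 ≤ j)
    (hj2 : j ≤ d.n) (h : d.row l ≤ lazyShape d.X j) : d.opener l < d.closer j := by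
  have hbefore : countIcc d.n (fun k => lazyShape d.X k < d.row l) ≤ j - 1 :=
    countIcc_le_of_lt fun _ _ _ hk => lt_of_lazyShape_lt (hk.trans_le h)
  have hrank := d.lexRank_lt_countIcc_row_le hl1 hl2
  have hrow : countIcc d.n (fun k => d.row k ≤ d.row l) ≤
      countIcc d.n (fun k => d.row k ≤ lazyShape d.X j) :=
    countIcc_le_countIcc fun _ _ _ hk => hk.trans h
  rw [d.opener_eq hl1 hl2, d.closer_eq hj1 hj2]
  omega

theorem closer_lt_opener_of_lt_row (hl1 : 1 ≤ l) (hl2 : l ≤ d.n) (hj1 : 1 ≤ j)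
    (hj2 : j ≤ d.n) (h : lazyShape d.X j < d.row l) : d.closer j < d.opener l := by
  have hbefore : j ≤ countIcc d.n (fun k => lazyShape d.X k < d.row l) :=
    calc j = countIcc d.n (· ≤ j) := (countIcc_eq_of_iff_le hj2 fun _ _ _ => Iff.rfl).symm
      _ ≤ _ := countIcc_le_countIcc fun _ _ _ hk => (lazyShape_mono d.X hk).trans_lt h
  have hrow : countIcc d.n (fun k => d.row k ≤ lazyShape d.X j) ≤
      countIcc d.n (fun k => d.row k < d.row l) :=
    countIcc_le_countIcc fun _ _ _ hk => hk.trans_lt h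
  have hrank : countIcc d.n (fun k => d.row k < d.row l) ≤ d.lexRank l :=
    d.countIcc_row_lt_le_lexRank
  rw [d.opener_eq hl1 hl2, d.closer_eq hj1 hj2]
  omega

theorem opener_lt_closer_iff (hl1 : 1 ≤ l) (hl2 : l ≤ d.n) (hj1 : 1 ≤ j) (hj2 : j ≤ d.n) :
    d.opener l < d.closer j ↔ d.row l ≤ lazyShape d.X j :=
  ⟨fun h => not_lt.1 fun h' => (d.closer_lt_opener_of_lt_row hl1 hl2 hj1 hj2 h').not_gt h,
    d.opener_lt_closer_of_row_le hl1 hl2 hj1 hj2⟩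

theorem opener_lt_opener (hi1 : 1 ≤ i) (hi2 : i ≤ d.n) (hj1 : 1 ≤ j) (hj2 : j ≤ d.n)
    (h : d.lexKey i < d.lexKey j) : d.opener i < d.opener j := by
  have hrow : d.row i ≤ d.row j := by rcases d.lexKey_lt_lexKey.1 h with h | h <;> omega
  have hbefore : countIcc d.n (fun k => lazyShape d.X k < d.row i) ≤
      countIcc d.n (fun k => lazyShape d.X k < d.row j) :=
    countIcc_le_countIcc fun _ _ _ hk => hk.trans_le hrow
  have hrank := d.lexRank_lt_lexRank hi1 hi2 h
  rw [d.opener_eq hi1 hi2, d.opener_eq hj1 hj2]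
  omega

/-- Between the openers of two rows lies the closer of a column of the lower height. -/
theorem opener_add_two_le (hi1 : 1 ≤ i) (hi2 : i ≤ d.n) (hj1 : 1 ≤ j) (hj2 : j ≤ d.n)
    (h : d.row j < d.row i) : d.opener j + 2 ≤ d.opener i := by
  obtain ⟨k, hk1, hk2, hk⟩ :=
    exists_lazyShape_eq (d.one_le_row j hj1 hj2) (d.row_le_lazyShape_n hj1 hj2)
  have hbefore : countIcc d.n (fun k => lazyShape d.X k < d.row j) <
      countIcc d.n (fun k => lazyShape d.X k < d.row i) :=
    countIcc_lt_countIcc (fun _ _ _ hk => hk.trans h) hk1 hk2 (hk ▸ h) (by omega)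
  have hrank := d.lexRank_lt_lexRank hj1 hj2 (d.lexKey_lt_lexKey.2 (Or.inl h))
  rw [d.opener_eq hi1 hi2, d.opener_eq hj1 hj2]
  omega

theorem opener_lt_opener_iff (hi1 : 1 ≤ i) (hi2 : i ≤ d.n) (hj1 : 1 ≤ j) (hj2 : j ≤ d.n) :
    d.opener i < d.opener j ↔ d.lexKey i < d.lexKey j := by
  refine ⟨fun h => ?_, d.opener_lt_opener hi1 hi2 hj1 hj2⟩
  rcases lt_trichotomy (d.lexKey i) (d.lexKey j) with hlt | heq | hgt
  · exact hlt
  · cases d.lexKey_injective heq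
    exact absurd h (lt_irrefl _)
  · exact absurd (d.opener_lt_opener hj1 hj2 hi1 hi2 hgt) h.not_gt

theorem opener_inj (hi1 : 1 ≤ i) (hi2 : i ≤ d.n) (hj1 : 1 ≤ j) (hj2 : j ≤ d.n)
    (h : d.opener i = d.opener j) : i = j := by
  rcases lt_trichotomy (d.lexKey i) (d.lexKey j) with hlt | heq | hgt
  · exact absurd h (d.opener_lt_opener hi1 hi2 hj1 hj2 hlt).ne
  · exact d.lexKey_injective heq
  · exact absurd h (d.opener_lt_opener hj1 hj2 hi1 hi2 hgt).ne'

theorem closer_lt_closer (hi1 : 1 ≤ i) (hj2 : j ≤ d.n) (h : i < j) :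
    d.closer i < d.closer j := by
  have : countIcc d.n (fun k => d.row k ≤ lazyShape d.X i) ≤
      countIcc d.n (fun k => d.row k ≤ lazyShape d.X j) :=
    countIcc_le_countIcc fun _ _ _ hk => hk.trans (lazyShape_mono d.X h.le)
  rw [d.closer_eq hi1 (by omega), d.closer_eq (by omega) hj2]
  omega

theorem opener_mem (hi1 : 1 ≤ i) (hi2 : i ≤ d.n) : d.opener i ∈ Set.Icc 1 (2 * d.n) := by
  have hbefore := countIcc_le d.n (fun k => lazyShape d.X k < d.row i)
  have hrank := (d.lexRank_lt_countIcc_row_le hi1 hi2).trans_le (countIcc_le _ _)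
  rw [d.opener_eq hi1 hi2, Set.mem_Icc]
  omega

theorem closer_mem (hi1 : 1 ≤ i) (hi2 : i ≤ d.n) : d.closer i ∈ Set.Icc 1 (2 * d.n) := by
  have := countIcc_le d.n (fun k => d.row k ≤ lazyShape d.X i)
  rw [d.closer_eq hi1 hi2, Set.mem_Icc]
  omega

theorem opener_ne_closer (hi1 : 1 ≤ i) (hi2 : i ≤ d.n) (hj1 : 1 ≤ j) (hj2 : j ≤ d.n) :
    d.opener i ≠ d.closer j := by
  rcases le_or_gt (d.row i) (lazyShape d.X j) with h | h
  · exact (d.opener_lt_closer_of_row_le hi1 hi2 hj1 hj2 h).ne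
  · exact (d.closer_lt_opener_of_lt_row hi1 hi2 hj1 hj2 h).ne'

/-- The `n` openers and `n` closers are distinct points of `[1, 2n]`, so they fill it. -/
theorem exists_opener_or_closer_eq {p : ℕ} (hp : p ∈ Set.Icc 1 (2 * d.n)) :
    ∃ i, 1 ≤ i ∧ i ≤ d.n ∧ (d.opener i = p ∨ d.closer i = p) := by
  classical
  have hinj : ∀ f : ℕ → ℕ,
      (∀ i j, 1 ≤ i → i ≤ d.n → 1 ≤ j → j ≤ d.n → f i = f j → i = j) →
      ((Finset.Icc 1 d.n).image f).card = d.n := fun f hf => by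
    rw [Finset.card_image_of_injOn fun i hi j hj => by
      simp only [Finset.coe_Icc, Set.mem_Icc] at hi hj; exact hf i j hi.1 hi.2 hj.1 hj.2,
      Nat.card_Icc, Nat.add_sub_cancel]
  have hclosers := hinj d.closer fun i j hi1 hi2 hj1 hj2 h => by
    rcases lt_trichotomy i j with hij | rfl | hij
    · exact absurd h (d.closer_lt_closer hi1 hj2 hij).ne
    · rfl
    · exact absurd h (d.closer_lt_closer hj1 hi2 hij).ne'
  have hopeners := hinj d.opener fun i j hi1 hi2 hj1 hj2 => d.opener_inj hi1 hi2 hj1 hj2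
  have hdisj :
      Disjoint ((Finset.Icc 1 d.n).image d.opener) ((Finset.Icc 1 d.n).image d.closer) := by
    simp only [Finset.disjoint_left, Finset.mem_image, Finset.mem_Icc]
    rintro _ ⟨i, hi, rfl⟩ ⟨j, hj, he⟩
    exact d.opener_ne_closer hi.1 hi.2 hj.1 hj.2 he.symm
  have hsub : (Finset.Icc 1 d.n).image d.opener ∪ (Finset.Icc 1 d.n).image d.closer ⊆
      Finset.Icc 1 (2 * d.n) := by
    simp only [Finset.union_subset_iff, Finset.image_subset_iff, Finset.mem_Icc]
    exact ⟨fun i hi => d.opener_mem hi.1 hi.2, fun i hi => d.closer_mem hi.1 hi.2⟩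
  have hfill := Finset.eq_of_subset_of_card_le hsub (by
    rw [Finset.card_union_of_disjoint hdisj, hopeners, hclosers, Nat.card_Icc]; omega)
  have hp' : p ∈ Finset.Icc 1 (2 * d.n) := Finset.mem_Icc.2 hp
  rw [← hfill, Finset.mem_union, Finset.mem_image, Finset.mem_image] at hp'
  rcases hp' with ⟨i, hi, h⟩ | ⟨i, hi, h⟩ <;> rw [Finset.mem_Icc] at hi
  exacts [⟨i, hi.1, hi.2, Or.inl h⟩, ⟨i, hi.1, hi.2, Or.inr h⟩]

noncomputable def toMatching : Matching d.n where
  opener := d.opener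
  closer := d.closer
  opener_lt_closer i h1 h2 := d.opener_lt_closer_of_row_le h1 h2 h1 h2 (d.row_le_lazyShape i h1 h2)
  closer_mono _ _ h1 hij hj := d.closer_lt_closer h1 hj hij
  opener_mem _ h1 h2 := d.opener_mem h1 h2
  closer_mem _ h1 h2 := d.closer_mem h1 h2
  opener_inj _ _ hi1 hi2 hj1 hj2 := d.opener_inj hi1 hi2 hj1 hj2
  opener_ne_closer _ _ hi1 hi2 hj1 hj2 := d.opener_ne_closer hi1 hi2 hj1 hj2
  cover _ hp := d.exists_opener_or_closer_eq hp
  opener_eq_zero _ hi := if_neg (by simpa [Set.mem_Icc] using hi)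
  closer_eq_zero _ hi := if_neg (by simpa [Set.mem_Icc] using hi)

theorem toMatching_noLeftNesting : d.toMatching.NoLeftNesting := by
  rintro i j hi1 hi2 hj1 hj2 ⟨hop, hcl⟩
  have hij : i < j := (d.toMatching.closer_lt_closer_iff hi1 hi2 hj1 hj2).1 hcl
  have hkey := (d.opener_lt_opener_iff hj1 hj2 hi1 hi2).1 (show d.opener j < d.opener i by
    simp only [toMatching] at hop; omega)
  rcases d.lexKey_lt_lexKey.1 hkey with hrow | ⟨-, hji⟩
  · have := d.opener_add_two_le hi1 hi2 hj1 hj2 hrow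
    simp only [toMatching] at hop
    omega
  · omega

theorem closer_of_mem_X (h : i ∈ d.X) : d.closer i = d.closer (i - 1) + 1 := by
  have hb := d.mem_X_bounds h
  rw [d.closer_eq (by omega) hb.2, d.closer_eq (by omega) (by omega), d.lazyShape_of_mem_X h]
  omega

theorem X_subset_RadjSet : d.X ⊆ d.toMatching.RadjSet := fun _ h =>
  ⟨(d.mem_X_bounds h).1, (d.mem_X_bounds h).2, d.closer_of_mem_X h⟩

noncomputable def toMarkedMatching : MarkedMatching where
  n := d.n
  n_pos := d.one_le_n
  M := d.toMatching
  noLeftNesting := d.toMatching_noLeftNesting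
  X := d.X
  X_subset := d.X_subset_RadjSet

theorem opener_lt_opener_pred_iff (hi1 : 2 ≤ i) (hi2 : i ≤ d.n) :
    d.opener i < d.opener (i - 1) ↔ d.row i < d.row (i - 1) := by
  rw [d.opener_lt_opener_iff (by omega) hi2 (by omega) (by omega), lexKey_lt_lexKey]
  omega

theorem opener_eq_opener_pred_add_one_iff (hi1 : 2 ≤ i) (hi2 : i ≤ d.n) :
    d.opener i = d.opener (i - 1) + 1 ↔ d.row i = d.row (i - 1) := by
  constructor
  · intro h
    have hkey := (d.opener_lt_opener_iff (by omega) (by omega) (by omega) hi2).1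
      (show d.opener (i - 1) < d.opener i by omega)
    rcases d.lexKey_lt_lexKey.1 hkey with hrow | ⟨hrow, -⟩
    · have := d.opener_add_two_le (by omega) hi2 (by omega) (by omega) hrow
      omega
    · exact hrow.symm
  · intro h
    have hbefore : countIcc d.n (fun j => lazyShape d.X j < d.row i) =
        countIcc d.n (fun j => lazyShape d.X j < d.row (i - 1)) := by rw [h]
    rw [d.opener_eq (by omega) hi2, d.opener_eq (by omega) (by omega), hbefore,
      d.lexRank_eq_of_row_eq hi1 hi2 h]
    omega

theorem opener_lt_closer_pred_of_mem_X (h : i ∈ d.X) : d.opener i < d.closer (i - 1) := by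
  have hb := d.mem_X_bounds h
  refine d.opener_lt_closer_of_row_le (by omega) hb.2 (by omega) (by omega) ?_
  rw [← d.lazyShape_of_mem_X h]
  exact d.row_le_lazyShape i (by omega) hb.2

theorem toMatching_MinSet : d.toMatching.MinSet = {i | 1 ≤ i ∧ i ≤ d.n ∧ d.row i = 1} := by
  ext i
  simp only [Matching.MinSet, Set.mem_ofPred_eq, toMatching]
  refine and_congr_right fun h1 => and_congr_right fun h2 => ?_
  rw [d.opener_lt_closer_iff h1 h2 le_rfl d.one_le_n, lazyShape_one d.one_notMem_X]
  have := d.one_le_row i h1 h2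
  omega

theorem toMatching_RneSet_inter_X :
    d.toMatching.RneSet ∩ d.X =
      {i | 2 ≤ i ∧ i ≤ d.n ∧ d.row i < d.row (i - 1)} ∩ d.X := by
  ext i
  simp only [Matching.RneSet, Set.mem_inter_iff, Set.mem_ofPred_eq, toMatching]
  refine ⟨fun ⟨⟨h1, h2, hop, _⟩, hX⟩ =>
    ⟨⟨h1, h2, (d.opener_lt_opener_pred_iff h1 h2).1 hop⟩, hX⟩,
    fun ⟨⟨h1, h2, hrow⟩, hX⟩ => ⟨⟨h1, h2, (d.opener_lt_opener_pred_iff h1 h2).2 hrow,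
      d.closer_of_mem_X hX⟩, hX⟩⟩

theorem toMatching_LRcrSet_inter_X :
    d.toMatching.LRcrSet ∩ d.X =
      {i | 2 ≤ i ∧ i ≤ d.n ∧ d.row i = d.row (i - 1)} ∩ d.X := by
  ext i
  simp only [Matching.LRcrSet, Matching.RcrSet, Set.mem_inter_iff, Set.mem_ofPred_eq, toMatching]
  constructor
  · rintro ⟨⟨⟨h1, h2, -⟩, hop⟩, hX⟩
    exact ⟨⟨h1, h2, (d.opener_eq_opener_pred_add_one_iff h1 h2).1 hop⟩, hX⟩
  · rintro ⟨⟨h1, h2, hrow⟩, hX⟩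
    have hop := (d.opener_eq_opener_pred_add_one_iff h1 h2).2 hrow
    exact ⟨⟨⟨h1, h2, by omega, d.opener_lt_closer_pred_of_mem_X hX, d.closer_of_mem_X hX⟩,
      hop⟩, hX⟩

theorem toMatching_RcrpSet_inter_X :
    d.toMatching.RcrpSet ∩ d.X =
      {i | 2 ≤ i ∧ i ≤ d.n ∧ d.row (i - 1) < d.row i} ∩ d.X := by
  ext i
  simp only [Matching.RcrpSet, Matching.LRcrSet, Matching.RcrSet, Set.mem_inter_iff,
    Set.mem_sdiff, Set.mem_ofPred_eq, toMatching]
  constructor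
  · rintro ⟨⟨hcr, hnot⟩, hX⟩
    have ⟨h1, h2, hop, _⟩ := hcr
    have hle := (d.opener_lt_opener_pred_iff h1 h2).not.1 (by omega)
    have hne := (d.opener_eq_opener_pred_add_one_iff h1 h2).not.1 fun h => hnot ⟨hcr, h⟩
    exact ⟨⟨h1, h2, by omega⟩, hX⟩
  · rintro ⟨⟨h1, h2, hrow⟩, hX⟩
    have hop := (d.opener_lt_opener_pred_iff h1 h2).not.2 (by omega)
    have hne := (d.opener_eq_opener_pred_add_one_iff h1 h2).not.2 (by omega)
    have hne' : d.opener i ≠ d.opener (i - 1) := fun h =>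
      absurd (d.opener_inj (by omega) h2 (by omega) (by omega) h) (by omega)
    exact ⟨⟨⟨h1, h2, by omega, d.opener_lt_closer_pred_of_mem_X hX, d.closer_of_mem_X hX⟩,
      fun h => hne h.2⟩, hX⟩

end FlatCode

namespace MarkedMatching

variable (m : MarkedMatching) {i j s u : ℕ}

theorem mem_X_bounds (h : i ∈ m.X) : 2 ≤ i ∧ i ≤ m.n :=
  ⟨(m.X_subset h).1, (m.X_subset h).2.1⟩

theorem one_notMem_X : 1 ∉ m.X := fun h => by have := m.mem_X_bounds h; omega

theorem closer_of_mem_X (h : i ∈ m.X) : m.M.closer i = m.M.closer (i - 1) + 1 :=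
  (m.X_subset h).2.2

theorem exists_blockEnd (s : ℕ) : ∃ l, s ≤ l ∧ l + 1 ∉ m.X :=
  ⟨max s m.n, le_max_left _ _, fun h => by have := m.mem_X_bounds h; omega⟩

open Classical in
/-- The last column of the block of marked columns following `s`. -/
noncomputable def blockEnd (s : ℕ) : ℕ := Nat.find (m.exists_blockEnd s)

theorem le_blockEnd (s : ℕ) : s ≤ m.blockEnd s := by
  classical exact (Nat.find_spec (m.exists_blockEnd s)).1

theorem blockEnd_succ_notMem (s : ℕ) : m.blockEnd s + 1 ∉ m.X := by
  classical exact (Nat.find_spec (m.exists_blockEnd s)).2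

theorem blockEnd_le (hs : s ≤ m.n) : m.blockEnd s ≤ m.n := by
  classical exact Nat.find_le ⟨hs, fun h => by have := m.mem_X_bounds h; omega⟩

theorem mem_X_of_lt_of_le_blockEnd (h1 : s < u) (h2 : u ≤ m.blockEnd s) : u ∈ m.X := by
  classical
  by_contra hu
  exact Nat.find_min (m.exists_blockEnd s) (show u - 1 < Nat.find _ from by
    unfold blockEnd at h2; omega) ⟨by omega, by rwa [show u - 1 + 1 = u by omega]⟩

theorem closer_add_of_le_blockEnd (hs1 : 1 ≤ s) {k : ℕ} (hk : s + k ≤ m.blockEnd s) :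
    m.M.closer (s + k) = m.M.closer s + k := by
  induction k with
  | zero => rfl
  | succ k ih =>
    have hX := m.closer_of_mem_X (m.mem_X_of_lt_of_le_blockEnd (s := s) (by omega) hk)
    rw [show s + (k + 1) - 1 = s + k by omega, ih (by omega)] at hX
    omega

/-- The closers of a block occupy consecutive positions, so no opener lies among them. -/
theorem opener_lt_closer_or_closer_blockEnd_lt (hs1 : 1 ≤ s) (hs2 : s ≤ m.n) (hj1 : 1 ≤ j)
    (hj2 : j ≤ m.n) :
    m.M.opener j < m.M.closer s ∨ m.M.closer (m.blockEnd s) < m.M.opener j := by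
  by_contra! h
  have hbe := m.le_blockEnd s
  have hend := m.closer_add_of_le_blockEnd hs1 (k := m.blockEnd s - s) (by omega)
  rw [Nat.add_sub_cancel' hbe] at hend
  have hk := m.closer_add_of_le_blockEnd hs1 (k := m.M.opener j - m.M.closer s) (by omega)
  have := m.blockEnd_le hs2
  exact m.M.opener_ne_closer j (s + (m.M.opener j - m.M.closer s)) hj1 hj2 (by omega) (by omega)
    (by omega)

/-- The row of the dot of column `i` in the corresponding filling: one plus the number of blocks
whose closers all precede the opener of `i`. -/
noncomputable def level (i : ℕ) : ℕ :=
  if 1 ≤ i ∧ i ≤ m.n then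
    1 + countIcc m.n (fun j => m.M.closer j < m.M.opener i ∧ j + 1 ∉ m.X)
  else 0

theorem level_eq (h1 : 1 ≤ i) (h2 : i ≤ m.n) :
    m.level i = 1 + countIcc m.n (fun j => m.M.closer j < m.M.opener i ∧ j + 1 ∉ m.X) :=
  if_pos ⟨h1, h2⟩

theorem level_le_lazyShape (hi1 : 1 ≤ i) (hi2 : i ≤ m.n) (hj1 : 1 ≤ j) (hj2 : j ≤ m.n)
    (h : m.M.opener i < m.M.closer j) : m.level i ≤ lazyShape m.X j := by
  have : countIcc m.n (fun l => m.M.closer l < m.M.opener i ∧ l + 1 ∉ m.X) ≤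
      countIcc j (fun v => v ∉ m.X ∧ 2 ≤ v) := by
    refine countIcc_le_countIcc_of_injOn (· + 1) (fun l hl1 hl2 hl => ?_)
      fun _ _ _ _ _ _ _ _ h => by omega
    have := (m.M.closer_lt_closer_iff hl1 hl2 hj1 hj2).1 (by omega)
    exact ⟨⟨by omega, by omega⟩, hl.2, by omega⟩
  rw [m.level_eq hi1 hi2, lazyShape_eq_countIcc_add_one m.one_notMem_X hj1]
  omega

/-- Every unmarked column `v ≤ j` starts a block closed before the opener of `i`. -/
theorem lazyShape_lt_level (hi1 : 1 ≤ i) (hi2 : i ≤ m.n) (hj2 : j ≤ m.n)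
    (h : m.M.closer j < m.M.opener i) : lazyShape m.X j < m.level i := by
  have : lazyShape m.X j ≤
      countIcc m.n (fun l => m.M.closer l < m.M.opener i ∧ l + 1 ∉ m.X) := by
    refine countIcc_le_countIcc_of_injOn m.blockEnd (fun v hv1 hv2 hv => ?_)
      fun v v' _ _ hv _ _ hv' he => ?_
    · refine ⟨⟨hv1.trans (m.le_blockEnd v), m.blockEnd_le (hv2.trans hj2)⟩, ?_,
        m.blockEnd_succ_notMem v⟩
      have := m.M.closer_le_closer hv1 hj2 hv2
      have := m.opener_lt_closer_or_closer_blockEnd_lt hv1 (hv2.trans hj2) hi1 hi2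
      omega
    · by_contra hne
      rcases Nat.lt_or_gt_of_ne hne with hlt | hlt
      · exact hv' (m.mem_X_of_lt_of_le_blockEnd hlt (he ▸ m.le_blockEnd v'))
      · exact hv (m.mem_X_of_lt_of_le_blockEnd hlt (he.symm ▸ m.le_blockEnd v))
  rw [m.level_eq hi1 hi2]
  omega

theorem opener_lt_closer_iff (hi1 : 1 ≤ i) (hi2 : i ≤ m.n) (hj1 : 1 ≤ j) (hj2 : j ≤ m.n) :
    m.M.opener i < m.M.closer j ↔ m.level i ≤ lazyShape m.X j := by
  refine ⟨m.level_le_lazyShape hi1 hi2 hj1 hj2, fun h => not_le.1 fun h' => ?_⟩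
  have := m.lazyShape_lt_level hi1 hi2 hj2
    (h'.lt_of_ne (m.M.opener_ne_closer i j hi1 hi2 hj1 hj2).symm)
  omega

theorem level_le_level (hi1 : 1 ≤ i) (hi2 : i ≤ m.n) (hj1 : 1 ≤ j) (hj2 : j ≤ m.n)
    (h : m.M.opener j < m.M.opener i) : m.level j ≤ m.level i := by
  have := countIcc_le_countIcc (n := m.n)
    (P := fun l => m.M.closer l < m.M.opener j ∧ l + 1 ∉ m.X)
    (Q := fun l => m.M.closer l < m.M.opener i ∧ l + 1 ∉ m.X)
    fun _ _ _ hl => ⟨by omega, hl.2⟩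
  rw [m.level_eq hi1 hi2, m.level_eq hj1 hj2]
  omega

/-- A closer between two openers closes a whole block between them. -/
theorem level_lt_level {l : ℕ} (hi1 : 1 ≤ i) (hi2 : i ≤ m.n) (hj1 : 1 ≤ j) (hj2 : j ≤ m.n)
    (hl1 : 1 ≤ l) (hl2 : l ≤ m.n) (hjl : m.M.opener j < m.M.closer l)
    (hli : m.M.closer l < m.M.opener i) : m.level j < m.level i := by
  have hend : m.M.closer (m.blockEnd l) < m.M.opener i := by
    have := m.opener_lt_closer_or_closer_blockEnd_lt hl1 hl2 hi1 hi2
    omega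
  have hlt := countIcc_lt_countIcc (n := m.n)
    (P := fun l => m.M.closer l < m.M.opener j ∧ l + 1 ∉ m.X)
    (Q := fun l => m.M.closer l < m.M.opener i ∧ l + 1 ∉ m.X)
    (fun _ _ _ hl => ⟨by omega, hl.2⟩)
    (hl1.trans (m.le_blockEnd l)) (m.blockEnd_le hl2) ⟨hend, m.blockEnd_succ_notMem l⟩
    fun h => by have := m.M.closer_le_closer hl1 (m.blockEnd_le hl2) (m.le_blockEnd l); omega
  rw [m.level_eq hi1 hi2, m.level_eq hj1 hj2]
  omega

theorem opener_lt_opener_of_level_eq (hi1 : 1 ≤ i) (hi2 : i ≤ m.n) (hj1 : 1 ≤ j)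
    (hj2 : j ≤ m.n) (hlevel : m.level i = m.level j) (hij : i < j) :
    m.M.opener i < m.M.opener j := by
  by_contra! hle
  have hlt : m.M.opener j < m.M.opener i :=
    hle.lt_of_ne fun h => hij.ne' (m.M.opener_inj j i hj1 hj2 hi1 hi2 h)
  have := m.noLeftNesting.closer_lt_closer hi1 hi2 hj1 hj2 hlt fun l hl1 hl2 hl =>
    (m.level_lt_level hi1 hi2 hj1 hj2 hl1 hl2 hl.1 hl.2).ne' hlevel
  exact (m.M.closer_mono i j hi1 hij hj2).not_gt this

noncomputable def toFlatCode : FlatCode where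
  n := m.n
  X := m.X
  row := m.level
  one_le_n := m.n_pos
  X_subset _ h := m.mem_X_bounds h
  one_le_row i h1 h2 := by rw [m.level_eq h1 h2]; omega
  row_le_lazyShape i h1 h2 := (m.opener_lt_closer_iff h1 h2 h1 h2).1 (m.M.opener_lt_closer i h1 h2)
  row_eq_zero _ h := if_neg (by simpa [Set.mem_Icc] using h)

theorem opener_lt_opener_iff (hi1 : 1 ≤ i) (hi2 : i ≤ m.n) (hj1 : 1 ≤ j) (hj2 : j ≤ m.n) :
    m.M.opener j < m.M.opener i ↔ m.toFlatCode.lexKey j < m.toFlatCode.lexKey i := by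
  have hinj := m.M.opener_inj j i hj1 hj2 hi1 hi2
  rw [FlatCode.lexKey_lt_lexKey]
  change _ ↔ m.level j < m.level i ∨ m.level j = m.level i ∧ j < i
  constructor
  · intro h
    rcases (m.level_le_level hi1 hi2 hj1 hj2 h).lt_or_eq with hlt | heq
    · exact Or.inl hlt
    · refine Or.inr ⟨heq, lt_of_not_ge fun hij => ?_⟩
      rcases hij.lt_or_eq with hij | rfl
      · exact (m.opener_lt_opener_of_level_eq hi1 hi2 hj1 hj2 heq.symm hij).not_gt h
      · exact h.false
  · rintro (hlt | ⟨heq, hji⟩)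
    · by_contra! hle
      rcases hle.lt_or_eq with hlt' | heq'
      · exact (m.level_le_level hj1 hj2 hi1 hi2 hlt').not_gt hlt
      · exact hlt.ne (congrArg m.level (hinj heq'.symm))
    · exact m.opener_lt_opener_of_level_eq hj1 hj2 hi1 hi2 heq hji

theorem toFlatCode_opener (i : ℕ) : m.toFlatCode.opener i = m.M.opener i := by
  by_cases hi : 1 ≤ i ∧ i ≤ m.n
  · obtain ⟨hi1, hi2⟩ := hi
    obtain ⟨hop1, hop2⟩ := m.M.opener_mem i hi1 hi2
    have hpos := m.M.countIcc_closer_lt_add_countIcc_opener_lt (p := m.M.opener i) (by omega)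
    have hclosers : countIcc m.n (fun j => m.M.closer j < m.M.opener i) =
        countIcc m.n (fun j => lazyShape m.X j < m.level i) := countIcc_congr fun j hj1 hj2 => by
      have := m.opener_lt_closer_iff hi1 hi2 hj1 hj2
      have := m.M.opener_ne_closer i j hi1 hi2 hj1 hj2
      omega
    have hopeners : countIcc m.n (fun j => m.M.opener j < m.M.opener i) = m.toFlatCode.lexRank i :=
      countIcc_congr fun j hj1 hj2 => m.opener_lt_opener_iff hi1 hi2 hj1 hj2
    rw [FlatCode.opener_eq _ hi1 hi2]
    change 1 + countIcc m.n (fun j => lazyShape m.X j < m.level i) + _ = _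
    omega
  · rw [m.M.opener_eq_zero i (by simpa [Set.mem_Icc] using hi)]
    exact if_neg hi

theorem toFlatCode_closer (i : ℕ) : m.toFlatCode.closer i = m.M.closer i := by
  by_cases hi : 1 ≤ i ∧ i ≤ m.n
  · obtain ⟨hi1, hi2⟩ := hi
    obtain ⟨hcl1, hcl2⟩ := m.M.closer_mem i hi1 hi2
    have hpos := m.M.countIcc_closer_lt_add_countIcc_opener_lt (p := m.M.closer i) (by omega)
    have hclosers : countIcc m.n (fun j => m.M.closer j < m.M.closer i) = i - 1 :=
      countIcc_eq_of_iff_le (by omega) fun j hj1 hj2 => by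
        rw [m.M.closer_lt_closer_iff hj1 hj2 hi1 hi2]
        omega
    have hopeners : countIcc m.n (fun j => m.M.opener j < m.M.closer i) =
        countIcc m.n (fun j => m.level j ≤ lazyShape m.X i) :=
      countIcc_congr fun j hj1 hj2 => m.opener_lt_closer_iff hj1 hj2 hi1 hi2
    rw [FlatCode.closer_eq _ hi1 hi2]
    change i + countIcc m.n (fun j => m.level j ≤ lazyShape m.X i) = _
    omega
  · rw [m.M.closer_eq_zero i (by simpa [Set.mem_Icc] using hi)]
    exact if_neg hi

end MarkedMatching

theorem MarkedMatching.ext {A B : MarkedMatching} (hn : A.n = B.n)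
    (hopener : A.M.opener = B.M.opener) (hcloser : A.M.closer = B.M.closer) (hX : A.X = B.X) :
    A = B := by
  obtain ⟨n, _, M, _, X, _⟩ := A
  obtain ⟨n', _, M', _, X', _⟩ := B
  subst hn hX
  obtain ⟨opener, closer⟩ := M
  obtain ⟨opener', closer'⟩ := M'
  subst hopener hcloser
  rfl

theorem FlatCode.toMarkedMatching_toFlatCode (d : FlatCode) :
    d.toMarkedMatching.toFlatCode = d := by
  ext i
  · rfl
  · rfl
  change d.toMarkedMatching.level i = d.row i
  by_cases hi : 1 ≤ i ∧ i ≤ d.n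
  · obtain ⟨hi1, hi2⟩ := hi
    have hrow := d.one_le_row i hi1 hi2
    have hblocks : countIcc d.n (fun j => d.closer j < d.opener i ∧ j + 1 ∉ d.X) =
        countIcc d.n (fun j => lazyShape d.X j ≤ d.row i - 1 ∧ j + 1 ∉ d.X) :=
      countIcc_congr fun j hj1 hj2 => and_congr_left fun _ => by
        have := d.opener_lt_closer_iff hi1 hi2 hj1 hj2
        have := d.opener_ne_closer hi1 hi2 hj1 hj2
        omega
    rw [MarkedMatching.level_eq _ hi1 hi2]
    change 1 + countIcc d.n (fun j => d.closer j < d.opener i ∧ j + 1 ∉ d.X) = _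
    rw [hblocks, countIcc_blockEnd d.one_notMem_X (by have := d.row_le_lazyShape_n hi1 hi2; omega)]
    omega
  · rw [d.row_eq_zero i (by simpa [Set.mem_Icc] using hi)]
    exact if_neg hi

theorem MarkedMatching.toFlatCode_toMarkedMatching (m : MarkedMatching) :
    m.toFlatCode.toMarkedMatching = m :=
  MarkedMatching.ext rfl (funext m.toFlatCode_opener) (funext m.toFlatCode_closer) rfl

noncomputable def FlatCode.equivMarkedMatching : FlatCode ≃ MarkedMatching where
  toFun := FlatCode.toMarkedMatching
  invFun := MarkedMatching.toFlatCode
  left_inv := FlatCode.toMarkedMatching_toFlatCode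
  right_inv := MarkedMatching.toFlatCode_toMarkedMatching

namespace Filling

variable (T : Filling) {i j : ℕ}

theorem ext {T T' : Filling} (hlen : T.len = T'.len) (hshape : T.shape = T'.shape)
    (hdots : T.dots = T'.dots) : T = T' := by
  cases T
  cases T'
  subst hlen hshape hdots
  rfl

noncomputable def dotRow (i : ℕ) : ℕ := sSup {j | (i, j) ∈ T.dots}

theorem mem_dots_iff (hCS : T.ColumnStrict) (h1 : 1 ≤ i) (h2 : i ≤ T.len) :
    (i, j) ∈ T.dots ↔ j = T.dotRow i := by
  obtain ⟨j₀, hj₀, huniq⟩ := hCS i h1 h2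
  have : {j | (i, j) ∈ T.dots} = {j₀} := Set.eq_singleton_iff_unique_mem.2 ⟨hj₀, huniq⟩
  rw [dotRow, this, csSup_singleton]
  exact ⟨huniq j, fun h => h ▸ hj₀⟩

theorem dotRow_mem (hCS : T.ColumnStrict) (h1 : 1 ≤ i) (h2 : i ≤ T.len) :
    (i, T.dotRow i) ∈ T.dots :=
  (T.mem_dots_iff hCS h1 h2).2 rfl

theorem dotRow_eq_zero (h : i ∉ Set.Icc 1 T.len) : T.dotRow i = 0 := by
  have : {j | (i, j) ∈ T.dots} = ∅ := Set.eq_empty_of_forall_notMem fun j hj => by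
    have := T.dots_mem _ hj
    simp only [Set.mem_Icc] at h
    omega
  rw [dotRow, this, csSup_empty, Nat.bot_eq_zero]

theorem dots_eq_image (hCS : T.ColumnStrict) :
    T.dots = (fun i => (i, T.dotRow i)) '' Set.Icc 1 T.len := by
  ext ⟨i, j⟩
  refine ⟨fun h => ?_, ?_⟩
  · have hb := T.dots_mem _ h
    exact ⟨i, ⟨hb.1, hb.2.1⟩, by rw [(T.mem_dots_iff hCS hb.1 hb.2.1).1 h]⟩
  · rintro ⟨i, ⟨h1, h2⟩, he⟩
    simp only [Prod.mk.injEq] at he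
    obtain ⟨rfl, rfl⟩ := he
    exact T.dotRow_mem hCS h1 h2

theorem rowLen_add_countIcc_shape_lt (j : ℕ) :
    T.rowLen j + countIcc T.len (fun l => T.shape l < j) = T.len := by
  rw [rowLen, ← countIcc_eq_ncard, countIcc_congr (P := fun l => T.shape l < j)
    (Q := fun l => ¬ j ≤ T.shape l) fun _ _ _ => not_le.symm]
  exact countIcc_add_countIcc_not _ _

theorem shape_zero : T.shape 0 = 0 := T.shape_eq_zero 0 (by simp)

/-- A jump by two in the heights would create two rows of the same length. -/
theorem shape_succ_le (hF : T.Flat) (hi : i + 1 ≤ T.len) : T.shape (i + 1) ≤ T.shape i + 1 := by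
  by_contra! hjump
  have hshort : ∀ j, T.shape i < j → j ≤ T.shape (i + 1) → T.rowLen j = T.len - i := by
    intro j hj1 hj2
    have hcount : countIcc T.len (fun l => T.shape l < j) = i :=
      countIcc_eq_of_iff_le (by omega) fun l hl1 hl2 => by
        constructor
        · intro hl
          by_contra! hil
          have := T.shape_mono (i + 1) l (by omega) hil hl2
          omega
        · intro hli
          rcases Nat.eq_zero_or_pos i with rfl | hi0
          · omega
          · have := T.shape_mono l i hl1 hli (by omega)
            omega
    have := T.rowLen_add_countIcc_shape_lt j
    omega
  have := hF (T.shape i + 1) (T.shape i + 2) (by omega) (by omega) (by omega)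
    (by rw [hshort _ (by omega) (by omega)]; omega) (by rw [hshort _ (by omega) (by omega)]; omega)
  exact this ((hshort _ (by omega) (by omega)).trans (hshort _ (by omega) (by omega)).symm)

theorem shape_eq_lazyShape (hF : T.Flat) (hi : i ≤ T.len) :
    T.shape i = lazyShape T.lazySet i := by
  induction i with
  | zero => rw [shape_zero, lazyShape_zero]
  | succ i ih =>
    have ih := ih (by omega)
    have hstep := T.shape_succ_le hF hi
    have hpos := T.shape_pos (i + 1) (by omega) hi
    by_cases hX : i + 1 ∈ T.lazySet
    · rw [lazyShape_succ_of_mem hX, ← ih, ← hX.2.2, Nat.add_sub_cancel]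
    · rw [lazyShape_succ_of_notMem hX, ← ih]
      rcases Nat.eq_zero_or_pos i with rfl | hi0
      · rw [shape_zero] at hstep ⊢
        omega
      · have hne : T.shape i ≠ T.shape (i + 1) := fun h =>
          hX ⟨by omega, hi, by rwa [Nat.add_sub_cancel]⟩
        have := T.shape_mono i (i + 1) hi0 (by omega) hi
        omega

noncomputable def toFlatCode (hCS : T.ColumnStrict) (hF : T.Flat) : FlatCode where
  n := T.len
  X := T.lazySet
  row := T.dotRow
  one_le_n := T.len_pos
  X_subset _ h := ⟨h.1, h.2.1⟩
  one_le_row _ h1 h2 := (T.dots_mem _ (T.dotRow_mem hCS h1 h2)).2.2.1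
  row_le_lazyShape _ h1 h2 :=
    T.shape_eq_lazyShape hF h2 ▸ (T.dots_mem _ (T.dotRow_mem hCS h1 h2)).2.2.2
  row_eq_zero _ h := T.dotRow_eq_zero h

end Filling

namespace FlatCode

variable (d : FlatCode) {i j : ℕ}

noncomputable def toFilling : Filling where
  len := d.n
  shape i := if 1 ≤ i ∧ i ≤ d.n then lazyShape d.X i else 0
  dots := (fun i => (i, d.row i)) '' Set.Icc 1 d.n
  len_pos := d.one_le_n
  shape_pos i h1 h2 := by
    rw [if_pos ⟨h1, h2⟩]
    exact one_le_lazyShape d.one_notMem_X h1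
  shape_mono i j h1 hij hj := by
    rw [if_pos ⟨h1, hij.trans hj⟩, if_pos ⟨h1.trans hij, hj⟩]
    exact lazyShape_mono d.X hij
  shape_eq_zero _ hi := if_neg (by simpa [Set.mem_Icc] using hi)
  dots_mem := by
    rintro _ ⟨i, ⟨h1, h2⟩, rfl⟩
    refine ⟨h1, h2, d.one_le_row i h1 h2, ?_⟩
    rw [if_pos ⟨h1, h2⟩]
    exact d.row_le_lazyShape i h1 h2

theorem toFilling_len : d.toFilling.len = d.n := rfl

theorem toFilling_shape (h1 : 1 ≤ i) (h2 : i ≤ d.n) : d.toFilling.shape i = lazyShape d.X i :=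
  if_pos ⟨h1, h2⟩

theorem mem_toFilling_dots_iff (h1 : 1 ≤ i) (h2 : i ≤ d.n) :
    (i, j) ∈ d.toFilling.dots ↔ j = d.row i := by
  refine ⟨?_, fun h => ⟨i, ⟨h1, h2⟩, by rw [h]⟩⟩
  rintro ⟨i', -, he⟩
  simp only [Prod.mk.injEq] at he
  obtain ⟨rfl, rfl⟩ := he
  rfl

theorem toFilling_columnStrict : d.toFilling.ColumnStrict := fun i h1 h2 =>
  ⟨d.row i, (d.mem_toFilling_dots_iff h1 h2).2 rfl, fun _ => (d.mem_toFilling_dots_iff h1 h2).1⟩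

theorem toFilling_rowLen_lt_rowLen (hj : 1 ≤ j) (hjj' : j < j')
    (hj' : 1 ≤ d.toFilling.rowLen j') :
    d.toFilling.rowLen j' < d.toFilling.rowLen j := by
  have hlower : ∀ v, countIcc d.toFilling.len (fun l => d.toFilling.shape l < v) =
      countIcc d.n (fun l => lazyShape d.X l < v) := fun v =>
    countIcc_congr fun l h1 h2 => by rw [d.toFilling_shape h1 h2]
  have hj'n : j' ≤ lazyShape d.X d.n := by
    by_contra! h
    have := d.toFilling.rowLen_add_countIcc_shape_lt j'
    rw [hlower, countIcc_eq_self fun l _ hl => (lazyShape_mono d.X hl).trans_lt h,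
      toFilling_len] at this
    omega
  obtain ⟨k, hk1, hk2, hk⟩ := exists_lazyShape_eq hj (hjj'.le.trans hj'n)
  have hlt : countIcc d.n (fun l => lazyShape d.X l < j) <
      countIcc d.n (fun l => lazyShape d.X l < j') :=
    countIcc_lt_countIcc (fun _ _ _ hl => hl.trans hjj') hk1 hk2 (by omega) (by omega)
  have := d.toFilling.rowLen_add_countIcc_shape_lt j
  have := d.toFilling.rowLen_add_countIcc_shape_lt j'
  rw [hlower, toFilling_len] at *
  omega

theorem toFilling_flat : d.toFilling.Flat := by
  intro j j' hj hj' hne hrow hrow'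
  rcases Nat.lt_or_gt_of_ne hne with hlt | hlt
  · exact (d.toFilling_rowLen_lt_rowLen hj hlt hrow').ne'
  · exact (d.toFilling_rowLen_lt_rowLen hj' hlt hrow).ne

theorem toFilling_lazySet : d.toFilling.lazySet = d.X := by
  ext i
  refine ⟨fun ⟨h1, h2, h⟩ => ?_, fun h => ?_⟩
  · change i ≤ d.n at h2
    rwa [d.toFilling_shape (by omega) (by omega), d.toFilling_shape (by omega) h2,
      lazyShape_pred_eq_iff (by omega)] at h
  · have hb := d.mem_X_bounds h
    refine ⟨hb.1, hb.2, ?_⟩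
    rw [d.toFilling_shape (by omega) (by omega), d.toFilling_shape (by omega) hb.2,
      lazyShape_pred_eq_iff (by omega)]
    exact h

theorem toFilling_toFlatCode :
    d.toFilling.toFlatCode d.toFilling_columnStrict d.toFilling_flat = d := by
  ext i
  · rfl
  · exact Set.ext_iff.1 d.toFilling_lazySet i
  change d.toFilling.dotRow i = d.row i
  by_cases hi : 1 ≤ i ∧ i ≤ d.n
  · exact ((d.toFilling.mem_dots_iff d.toFilling_columnStrict hi.1 hi.2).1
      ((d.mem_toFilling_dots_iff hi.1 hi.2).2 rfl)).symm
  · rw [d.toFilling.dotRow_eq_zero (by simpa [Set.mem_Icc, toFilling_len] using hi),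
      d.row_eq_zero i (by simpa [Set.mem_Icc] using hi)]

end FlatCode

theorem Filling.toFlatCode_toFilling (T : Filling) (hCS : T.ColumnStrict) (hF : T.Flat) :
    (T.toFlatCode hCS hF).toFilling = T := by
  refine Filling.ext rfl (funext fun i => ?_) (T.dots_eq_image hCS).symm
  by_cases hi : 1 ≤ i ∧ i ≤ T.len
  · exact (T.shape_eq_lazyShape hF hi.2).symm ▸ (T.toFlatCode hCS hF).toFilling_shape hi.1 hi.2
  · rw [T.shape_eq_zero i (by simpa [Set.mem_Icc] using hi)]
    exact if_neg hi

noncomputable def FlatCode.equivFilling :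
    FlatCode ≃ {T : Filling // T.ColumnStrict ∧ T.Flat} where
  toFun d := ⟨d.toFilling, d.toFilling_columnStrict, d.toFilling_flat⟩
  invFun T := T.1.toFlatCode T.2.1 T.2.2
  left_inv := FlatCode.toFilling_toFlatCode
  right_inv T := Subtype.ext (T.1.toFlatCode_toFilling T.2.1 T.2.2)

namespace Filling

variable (T : Filling) {i : ℕ}

theorem nDots_eq_len (hCS : T.ColumnStrict) : T.nDots = T.len := by
  rw [nDots, T.dots_eq_image hCS, Set.ncard_image_of_injective _ fun _ _ h => (Prod.ext_iff.1 h).1,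
    Set.ncard_eq_toFinset_card', Set.toFinset_Icc, Nat.card_Icc, Nat.add_sub_cancel]

theorem MinSet_eq (hCS : T.ColumnStrict) :
    T.MinSet = {i | 1 ≤ i ∧ i ≤ T.len ∧ T.dotRow i = 1} := by
  ext i
  simp only [MinSet, Set.mem_ofPred_eq]
  exact and_congr_right fun h1 => and_congr_right fun h2 =>
    (T.mem_dots_iff hCS h1 h2).trans eq_comm

theorem exists_dots_pred_iff (hCS : T.ColumnStrict) (h1 : 2 ≤ i) (h2 : i ≤ T.len)
    (r : ℕ → ℕ → Prop) :
    (∃ j j', (i - 1, j) ∈ T.dots ∧ (i, j') ∈ T.dots ∧ r j j') ↔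
      r (T.dotRow (i - 1)) (T.dotRow i) := by
  simp only [T.mem_dots_iff hCS (i := i - 1) (by omega) (by omega), T.mem_dots_iff hCS (i := i)
    (by omega) h2, exists_and_left, exists_eq_left]

theorem DesSet_eq (hCS : T.ColumnStrict) :
    T.DesSet = {i | 2 ≤ i ∧ i ≤ T.len ∧ T.dotRow i < T.dotRow (i - 1)} := by
  ext i
  exact and_congr_right fun h1 => and_congr_right fun h2 =>
    T.exists_dots_pred_iff hCS h1 h2 fun j j' => j' < j

theorem AscSet_eq (hCS : T.ColumnStrict) :
    T.AscSet = {i | 2 ≤ i ∧ i ≤ T.len ∧ T.dotRow (i - 1) < T.dotRow i} := by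
  ext i
  exact and_congr_right fun h1 => and_congr_right fun h2 =>
    T.exists_dots_pred_iff hCS h1 h2 fun j j' => j < j'

theorem RepSet_eq (hCS : T.ColumnStrict) :
    T.RepSet = {i | 2 ≤ i ∧ i ≤ T.len ∧ T.dotRow i = T.dotRow (i - 1)} := by
  ext i
  refine and_congr_right fun h1 => and_congr_right fun h2 => ?_
  refine (Iff.trans ?_ (T.exists_dots_pred_iff hCS h1 h2 fun j j' => j = j')).trans eq_comm
  exact ⟨fun ⟨j, hj, hj'⟩ => ⟨j, j, hj, hj', rfl⟩,
    fun ⟨j, _, hj, hj', he⟩ => ⟨j, hj, he ▸ hj'⟩⟩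

end Filling

section DirectSum

variable {A B : Set ℕ} {n₁ : ℕ}

theorem lazyShape_union_image_add_of_le (hB : ∀ b ∈ B, 1 ≤ b) {j : ℕ} (hj : j ≤ n₁) :
    lazyShape (A ∪ (· + n₁) '' B) j = lazyShape A j :=
  countIcc_congr fun v _ hv => by
    simp only [Set.mem_union, Set.mem_image, not_or, and_iff_left_iff_imp]
    rintro - ⟨b, hb, rfl⟩
    have := hB b hb
    omega

theorem lazyShape_union_image_add (hA : ∀ a ∈ A, a ≤ n₁) (hB : ∀ b ∈ B, 1 ≤ b) (r : ℕ) :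
    lazyShape (A ∪ (· + n₁) '' B) (n₁ + r) = lazyShape A n₁ + lazyShape B r := by
  rw [lazyShape, countIcc_add]
  refine congrArg₂ (· + ·) (lazyShape_union_image_add_of_le hB le_rfl)
    (countIcc_congr fun v hv _ => ?_)
  simp only [Set.mem_union, Set.mem_image, not_or]
  constructor
  · exact fun h hv' => h.2 ⟨v, hv', by omega⟩
  · refine fun h => ⟨fun ha => ?_, fun ⟨b, hb, he⟩ => h (by rwa [show v = b by omega])⟩
    have := hA _ ha
    omega

end DirectSum

namespace FlatCode

/-- `e` codes the direct sum of the fillings coded by `d` and `d'`. -/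
structure IsDsum (d d' e : FlatCode) : Prop where
  n_eq : e.n = d.n + d'.n
  X_eq : e.X = d.X ∪ (· + d.n) '' d'.X
  row_low : ∀ i, 1 ≤ i → i ≤ d.n → e.row i = d.row i
  row_high : ∀ r, 1 ≤ r → r ≤ d'.n → e.row (d.n + r) = d'.row r + lazyShape d.X d.n

namespace IsDsum

variable {d d' e : FlatCode} {i j r v : ℕ}

theorem lazyShape_low (h : d.IsDsum d' e) (hj : j ≤ d.n) : lazyShape e.X j = lazyShape d.X j := by
  rw [h.X_eq]
  exact lazyShape_union_image_add_of_le (fun b hb => by have := d'.mem_X_bounds hb; omega) hj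

theorem lazyShape_high (h : d.IsDsum d' e) (r : ℕ) :
    lazyShape e.X (d.n + r) = lazyShape d.X d.n + lazyShape d'.X r := by
  rw [h.X_eq]
  exact lazyShape_union_image_add (fun a ha => (d.mem_X_bounds ha).2)
    (fun b hb => by have := d'.mem_X_bounds hb; omega) r

theorem lexKey_low_lt_high (h : d.IsDsum d' e) (hj1 : 1 ≤ j) (hj2 : j ≤ d.n) (hr1 : 1 ≤ r)
    (hr2 : r ≤ d'.n) :
    e.lexKey j < e.lexKey (d.n + r) := by
  have := d.row_le_lazyShape_n hj1 hj2
  have := d'.one_le_row r hr1 hr2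
  rw [lexKey_lt_lexKey, h.row_low j hj1 hj2, h.row_high r hr1 hr2]
  omega

theorem lexKey_low_iff (h : d.IsDsum d' e) (hi1 : 1 ≤ i) (hi2 : i ≤ d.n) (hj1 : 1 ≤ j)
    (hj2 : j ≤ d.n) :
    e.lexKey j < e.lexKey i ↔ d.lexKey j < d.lexKey i := by
  rw [lexKey_lt_lexKey, lexKey_lt_lexKey, h.row_low i hi1 hi2, h.row_low j hj1 hj2]

theorem lexKey_high_iff (h : d.IsDsum d' e) (hr1 : 1 ≤ r) (hr2 : r ≤ d'.n) (hv1 : 1 ≤ v)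
    (hv2 : v ≤ d'.n) :
    e.lexKey (d.n + v) < e.lexKey (d.n + r) ↔ d'.lexKey v < d'.lexKey r := by
  rw [lexKey_lt_lexKey, lexKey_lt_lexKey, h.row_high r hr1 hr2, h.row_high v hv1 hv2]
  omega

theorem closer_low (h : d.IsDsum d' e) (hi1 : 1 ≤ i) (hi2 : i ≤ d.n) :
    e.closer i = d.closer i := by
  have hhigh : countIcc d'.n (fun v => e.row (d.n + v) ≤ lazyShape e.X i) = 0 :=
    countIcc_eq_zero fun v hv1 hv2 => by
      have := d'.one_le_row v hv1 hv2
      have := lazyShape_mono d.X hi2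
      rw [h.row_high v hv1 hv2, h.lazyShape_low hi2]
      omega
  have hlow : countIcc d.n (fun j => e.row j ≤ lazyShape e.X i) =
      countIcc d.n (fun j => d.row j ≤ lazyShape d.X i) :=
    countIcc_congr fun j hj1 hj2 => by rw [h.row_low j hj1 hj2, h.lazyShape_low hi2]
  rw [e.closer_eq hi1 (by rw [h.n_eq]; omega), d.closer_eq hi1 hi2, h.n_eq, countIcc_add, hhigh,
    hlow, Nat.add_zero]

theorem closer_high (h : d.IsDsum d' e) (hr1 : 1 ≤ r) (hr2 : r ≤ d'.n) :
    e.closer (d.n + r) = d'.closer r + 2 * d.n := by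
  have hlow : countIcc d.n (fun j => e.row j ≤ lazyShape e.X (d.n + r)) = d.n :=
    countIcc_eq_self fun j hj1 hj2 => by
      have := d.row_le_lazyShape_n hj1 hj2
      rw [h.row_low j hj1 hj2, h.lazyShape_high]
      omega
  have hhigh : countIcc d'.n (fun v => e.row (d.n + v) ≤ lazyShape e.X (d.n + r)) =
      countIcc d'.n (fun v => d'.row v ≤ lazyShape d'.X r) :=
    countIcc_congr fun v hv1 hv2 => by
      rw [h.row_high v hv1 hv2, h.lazyShape_high]
      omega
  rw [e.closer_eq (by omega) (by rw [h.n_eq]; omega), d'.closer_eq hr1 hr2, h.n_eq, countIcc_add,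
    hlow, hhigh]
  omega

theorem opener_low (h : d.IsDsum d' e) (hi1 : 1 ≤ i) (hi2 : i ≤ d.n) :
    e.opener i = d.opener i := by
  have hrow := d.row_le_lazyShape_n hi1 hi2
  have hshape : countIcc e.n (fun j => lazyShape e.X j < e.row i) =
      countIcc d.n (fun j => lazyShape d.X j < d.row i) := by
    rw [h.n_eq, countIcc_add, countIcc_eq_zero (n := d'.n) fun v _ _ => by
      rw [h.lazyShape_high, h.row_low i hi1 hi2]; omega, Nat.add_zero]
    exact countIcc_congr fun j _ hj2 => by rw [h.lazyShape_low hj2, h.row_low i hi1 hi2]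
  have hrank : e.lexRank i = d.lexRank i := by
    rw [lexRank, h.n_eq, countIcc_add, countIcc_eq_zero (n := d'.n) fun v hv1 hv2 hlt =>
      (h.lexKey_low_lt_high hi1 hi2 hv1 hv2).not_gt hlt, Nat.add_zero]
    exact countIcc_congr fun j hj1 hj2 => h.lexKey_low_iff hi1 hi2 hj1 hj2
  rw [e.opener_eq hi1 (by rw [h.n_eq]; omega), d.opener_eq hi1 hi2, hshape, hrank]

theorem opener_high (h : d.IsDsum d' e) (hr1 : 1 ≤ r) (hr2 : r ≤ d'.n) :
    e.opener (d.n + r) = d'.opener r + 2 * d.n := by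
  have hshape : countIcc e.n (fun j => lazyShape e.X j < e.row (d.n + r)) =
      d.n + countIcc d'.n (fun v => lazyShape d'.X v < d'.row r) := by
    rw [h.n_eq, countIcc_add, countIcc_eq_self fun j _ hj2 => by
      have := lazyShape_mono d.X hj2
      have := d'.one_le_row r hr1 hr2
      rw [h.lazyShape_low hj2, h.row_high r hr1 hr2]; omega]
    exact congrArg _ (countIcc_congr fun v _ _ => by
      rw [h.lazyShape_high, h.row_high r hr1 hr2]; omega)
  have hrank : e.lexRank (d.n + r) = d.n + d'.lexRank r := by
    rw [lexRank, h.n_eq, countIcc_add, countIcc_eq_self fun j hj1 hj2 =>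
      h.lexKey_low_lt_high hj1 hj2 hr1 hr2]
    exact congrArg _ (countIcc_congr fun v hv1 hv2 => h.lexKey_high_iff hr1 hr2 hv1 hv2)
  rw [e.opener_eq (by omega) (by rw [h.n_eq]; omega), d'.opener_eq hr1 hr2, hshape, hrank]
  omega

theorem toMarkedMatching (h : d.IsDsum d' e) :
    MarkedMatching.IsDsum d.toMarkedMatching d'.toMarkedMatching e.toMarkedMatching :=
  ⟨⟨h.n_eq, fun _ h1 h2 => ⟨h.opener_low h1 h2, h.closer_low h1 h2⟩,
    fun _ h1 h2 => ⟨h.opener_high h1 h2, h.closer_high h1 h2⟩⟩, h.X_eq⟩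

end IsDsum

end FlatCode

namespace Filling.IsDsum

variable {T T' S : Filling} {r : ℕ}

theorem shape_add (h : T.IsDsum T' S) (hr : r ≤ T'.len) :
    S.shape (T.len + r) = T.shape T.len + T'.shape r := by
  rcases Nat.eq_zero_or_pos r with rfl | hr1
  · rw [Nat.add_zero, h.2.1 T.len T.len_pos le_rfl, shape_zero, Nat.add_zero]
  · exact h.2.2.1 r hr1 hr

theorem lazySet_eq (h : T.IsDsum T' S) (hF : T.Flat) (hF' : T'.Flat) (hFS : S.Flat) :
    S.lazySet = T.lazySet ∪ (· + T.len) '' T'.lazySet := by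
  have hlazy : ∀ U : Filling, U.lazySet ⊆ Set.Icc 1 U.len := fun U i hi => ⟨by
    have := hi.1; omega, hi.2.1⟩
  refine eq_of_lazyShape_eq (n := S.len) (hlazy S) ?_ fun i hi => ?_
  · rintro i (hi | ⟨b, hb, rfl⟩)
    · obtain ⟨h1, h2⟩ := hlazy T hi
      exact ⟨h1, by rw [h.1]; omega⟩
    · obtain ⟨h1, h2⟩ := hlazy T' hb
      exact ⟨show 1 ≤ b + T.len by omega, show b + T.len ≤ S.len by rw [h.1]; omega⟩
  have hB : ∀ b ∈ T'.lazySet, 1 ≤ b := fun b hb => (hlazy T' hb).1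
  rw [← S.shape_eq_lazyShape hFS hi]
  rcases le_or_gt i T.len with hiT | hiT
  · rw [lazyShape_union_image_add_of_le hB hiT, ← T.shape_eq_lazyShape hF hiT]
    rcases Nat.eq_zero_or_pos i with rfl | hi1
    · rw [shape_zero, shape_zero]
    · exact h.2.1 i hi1 hiT
  · obtain ⟨r, rfl⟩ := Nat.exists_eq_add_of_le hiT.le
    rw [lazyShape_union_image_add (fun a ha => (hlazy T ha).2) hB,
      h.shape_add (by have := h.1; omega),
      T.shape_eq_lazyShape hF le_rfl, T'.shape_eq_lazyShape hF' (by have := h.1; omega)]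

theorem toFlatCode (h : T.IsDsum T' S) (hCS : T.ColumnStrict) (hF : T.Flat)
    (hCS' : T'.ColumnStrict) (hF' : T'.Flat) (hCSS : S.ColumnStrict) (hFS : S.Flat) :
    (T.toFlatCode hCS hF).IsDsum (T'.toFlatCode hCS' hF') (S.toFlatCode hCSS hFS) where
  n_eq := h.1
  X_eq := h.lazySet_eq hF hF' hFS
  row_low i h1 h2 := by
    change i ≤ T.len at h2
    have hmem : (i, T.dotRow i) ∈ S.dots := h.2.2.2 ▸ Or.inl (T.dotRow_mem hCS h1 h2)
    exact ((S.mem_dots_iff hCSS h1 (by have := h.1; omega)).1 hmem).symm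
  row_high r h1 h2 := by
    change r ≤ T'.len at h2
    have hmem : (T.len + r, T'.dotRow r + T.shape T.len) ∈ S.dots :=
      h.2.2.2 ▸ Or.inr ⟨(r, T'.dotRow r), T'.dotRow_mem hCS' h1 h2, by simp only [add_comm]⟩
    change S.dotRow (T.len + r) = T'.dotRow r + lazyShape T.lazySet T.len
    rw [← T.shape_eq_lazyShape hF le_rfl]
    exact ((S.mem_dots_iff hCSS (by omega) (by have := h.1; omega)).1 hmem).symm

end Filling.IsDsum

/-- There is a bijection `f` from flat column-strict fillings to
marked matchings preserving all the listed statistics and respecting direct sums. -/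
theorem flat_colstrict_fillings_equiv_marked_matchings :
    ∃ f : {T : Filling // T.ColumnStrict ∧ T.Flat} → MarkedMatching,
      Function.Bijective f ∧
      (∀ T : {T : Filling // T.ColumnStrict ∧ T.Flat},
        T.1.nDots = (f T).n ∧
        T.1.MinSet = (f T).M.MinSet ∧
        T.1.lazySet = (f T).X ∧
        T.1.DesSet ∩ T.1.lazySet = (f T).M.RneSet ∩ (f T).X ∧
        T.1.AscSet ∩ T.1.lazySet = (f T).M.RcrpSet ∩ (f T).X ∧
        T.1.RepSet ∩ T.1.lazySet = (f T).M.LRcrSet ∩ (f T).X) ∧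
      (∀ T T' S : {T : Filling // T.ColumnStrict ∧ T.Flat},
        Filling.IsDsum T.1 T'.1 S.1 → MarkedMatching.IsDsum (f T) (f T') (f S)) := by
  refine ⟨FlatCode.equivFilling.symm.trans FlatCode.equivMarkedMatching, Equiv.bijective _,
    fun ⟨T, hCS, hF⟩ => ?_, fun ⟨T, hCS, hF⟩ ⟨T', hCS', hF'⟩ ⟨S, hCSS, hFS⟩ h =>
      (h.toFlatCode hCS hF hCS' hF' hCSS hFS).toMarkedMatching⟩
  set d := T.toFlatCode hCS hF
  exact ⟨T.nDots_eq_len hCS, T.MinSet_eq hCS ▸ d.toMatching_MinSet.symm, rfl,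
    T.DesSet_eq hCS ▸ d.toMatching_RneSet_inter_X.symm,
    T.AscSet_eq hCS ▸ d.toMatching_RcrpSet_inter_X.symm,
    T.RepSet_eq hCS ▸ d.toMatching_LRcrSet_inter_X.symm⟩
end

section
/- There is a bijection g from the set of column-positive staircase fillings to the set of enriched permutation fillings such that g(T ⊕ T') = g(T) ⊞ g(T') and, writing ρ = g(T): ℓ(T) = ℓ(ρ), n(T) = n(ρ), comp(T) = boxcomp(ρ), min(T) = lmin(ρ), and rmax(T) = rmax(ρ). -/
/-!
Write `S i ⊆ [1, i]` for the rows of the dots in column `i` of a column-positive staircase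
filling, and `m = max S (ℓ + 1)`. The enriched filling of the first `ℓ + 1` columns is obtained
from that of the first `ℓ` columns by inserting an empty row at height `m` and adding a column on
the right with dots in the rows `S (ℓ + 1)`. The new dot in row `m` is alone in its row and topmost
in its column; every other new dot lies below it and has an older dot to its left, since all rows
of the old square are occupied. Conversely the topmost dot of the last column of an enriched
filling is alone in its row, so deleting that row and column undoes the step, which gives the
bijection.

Each statistic satisfies the same recursion on both sides: the new column adds `#S (ℓ + 1)` dots,
and one left-to-right minimum iff `1 ∈ S (ℓ + 1)`; a cut after column `k` survives iff the new
column lies above row `k`; and the right-to-left maxima of depth `< t` are those of depth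
`< min t (ℓ + 1 - m)` before, together with the new dots of depth `< t`. Direct sums become boxed
sums because a row inserted above a block leaves it untouched.
-/

def rowShift (m j : ℕ) : ℕ := if j < m then j else j + 1

lemma rowShift_cases (m j : ℕ) :
    (j < m ∧ rowShift m j = j) ∨ (m ≤ j ∧ rowShift m j = j + 1) := by
  unfold rowShift; split_ifs <;> omega

lemma rowShift_strictMono (m : ℕ) : StrictMono (rowShift m) := fun a b h => by
  have := rowShift_cases m a; have := rowShift_cases m b; omega

lemma rowShift_ne (m j : ℕ) : rowShift m j ≠ m := by
  have := rowShift_cases m j; omega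

lemma exists_rowShift_eq {m j : ℕ} (h : j ≠ m) : ∃ j', rowShift m j' = j := by
  rcases Nat.lt_or_gt_of_ne h with h | h
  · exact ⟨j, by have := rowShift_cases m j; omega⟩
  · exact ⟨j - 1, by have := rowShift_cases m (j - 1); omega⟩

def IsLeftmostInRow (D : Set (ℕ × ℕ)) (p : ℕ × ℕ) : Prop := ∀ q ∈ D, q.2 = p.2 → p.1 ≤ q.1

def IsTopInColumn (D : Set (ℕ × ℕ)) (p : ℕ × ℕ) : Prop := ∀ q ∈ D, q.1 = p.1 → q.2 ≤ p.2

structure IsEnrichedDots (ℓ : ℕ) (D : Set (ℕ × ℕ)) : Prop where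
  bounds : ∀ p ∈ D, 1 ≤ p.1 ∧ p.1 ≤ ℓ ∧ 1 ≤ p.2 ∧ p.2 ≤ ℓ
  col : ∀ i, 1 ≤ i → i ≤ ℓ → ∃ j, (i, j) ∈ D
  row : ∀ j, 1 ≤ j → j ≤ ℓ → ∃ i, (i, j) ∈ D
  leftmost_iff_top : ∀ p ∈ D, IsLeftmostInRow D p ↔ IsTopInColumn D p

def addColumn (c m : ℕ) (D : Set (ℕ × ℕ)) (S : Set ℕ) : Set (ℕ × ℕ) :=
  (fun p : ℕ × ℕ => (p.1, rowShift m p.2)) '' D ∪ (c, ·) '' S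

section addColumn

variable {c m i j : ℕ} {D : Set (ℕ × ℕ)} {S : Set ℕ}

lemma mem_addColumn :
    (i, j) ∈ addColumn c m D S ↔ (∃ j', (i, j') ∈ D ∧ rowShift m j' = j) ∨ (i = c ∧ j ∈ S) := by
  simp only [addColumn, Set.mem_union, Set.mem_image, Prod.mk.injEq, Prod.exists]
  constructor
  · rintro (⟨a, b, h, rfl, rfl⟩ | ⟨b, h, rfl, rfl⟩)
    exacts [Or.inl ⟨b, h, rfl⟩, Or.inr ⟨rfl, h⟩]
  · rintro (⟨b, h, rfl⟩ | ⟨rfl, h⟩)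
    exacts [Or.inl ⟨i, b, h, rfl, rfl⟩, Or.inr ⟨j, h, rfl, rfl⟩]

lemma rowShift_mem_addColumn :
    (i, rowShift m j) ∈ addColumn c m D S ↔ (i, j) ∈ D ∨ (i = c ∧ rowShift m j ∈ S) := by
  simp [mem_addColumn, (rowShift_strictMono m).injective.eq_iff]

lemma forall_mem_addColumn {P : ℕ × ℕ → Prop} :
    (∀ p ∈ addColumn c m D S, P p) ↔ (∀ p ∈ D, P (p.1, rowShift m p.2)) ∧ ∀ j ∈ S, P (c, j) := by
  simp only [addColumn, Set.mem_union, or_imp, forall_and, Set.forall_mem_image]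

lemma isLeftmostInRow_addColumn_rowShift {p : ℕ × ℕ} (hp : p.1 < c) :
    IsLeftmostInRow (addColumn c m D S) (p.1, rowShift m p.2) ↔ IsLeftmostInRow D p := by
  simp only [IsLeftmostInRow, forall_mem_addColumn, (rowShift_strictMono m).injective.eq_iff]
  exact and_iff_left fun _ _ _ => hp.le

lemma isTopInColumn_addColumn_rowShift {p : ℕ × ℕ} (hp : p.1 < c) :
    IsTopInColumn (addColumn c m D S) (p.1, rowShift m p.2) ↔ IsTopInColumn D p := by
  simp only [IsTopInColumn, forall_mem_addColumn, (rowShift_strictMono m).le_iff_le]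
  exact and_iff_left fun _ _ h => absurd h hp.ne'

lemma isLeftmostInRow_addColumn_new (hD : ∀ p ∈ D, p.1 < c) :
    IsLeftmostInRow (addColumn c m D S) (c, j) ↔ ∀ p ∈ D, rowShift m p.2 ≠ j := by
  simp only [IsLeftmostInRow, forall_mem_addColumn]
  refine ⟨fun h p hp hpj => (hD p hp).not_ge (h.1 p hp hpj), fun h => ⟨fun p hp hpj => ?_, ?_⟩⟩
  · exact absurd hpj (h p hp)
  · exact fun _ _ _ => le_rfl

lemma isTopInColumn_addColumn_new (hD : ∀ p ∈ D, p.1 < c) :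
    IsTopInColumn (addColumn c m D S) (c, j) ↔ ∀ j' ∈ S, j' ≤ j := by
  simp only [IsTopInColumn, forall_mem_addColumn]
  exact ⟨fun h j' hj' => h.2 j' hj' trivial,
    fun h => ⟨fun p hp hpc => absurd hpc (hD p hp).ne, fun j' hj' _ => h j' hj'⟩⟩

end addColumn

/-- The dots of `g(T)`, where `S i` is the set of rows of the dots in column `i` of `T`. -/
noncomputable def squareDots : ℕ → (ℕ → Set ℕ) → Set (ℕ × ℕ)
  | 0, _ => ∅
  | ℓ + 1, S => addColumn (ℓ + 1) (sSup (S (ℓ + 1))) (squareDots ℓ S) (S (ℓ + 1))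

def IsStairColumns (ℓ : ℕ) (S : ℕ → Set ℕ) : Prop :=
  ∀ i, 1 ≤ i → i ≤ ℓ → (S i).Nonempty ∧ ∀ j ∈ S i, 1 ≤ j ∧ j ≤ i

section squareDots

variable {ℓ : ℕ} {S : ℕ → Set ℕ}

lemma squareDots_succ :
    squareDots (ℓ + 1) S = addColumn (ℓ + 1) (sSup (S (ℓ + 1))) (squareDots ℓ S) (S (ℓ + 1)) :=
  rfl

lemma IsStairColumns.of_succ (hS : IsStairColumns (ℓ + 1) S) : IsStairColumns ℓ S :=
  fun i h1 h2 => hS i h1 (by omega)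

lemma IsStairColumns.mem_last (hS : IsStairColumns (ℓ + 1) S) {j : ℕ} (hj : j ∈ S (ℓ + 1)) :
    1 ≤ j ∧ j ≤ ℓ + 1 :=
  (hS (ℓ + 1) (by omega) le_rfl).2 j hj

lemma IsStairColumns.finite_last (hS : IsStairColumns (ℓ + 1) S) : (S (ℓ + 1)).Finite :=
  (Set.finite_Icc 1 (ℓ + 1)).subset fun _ hj => hS.mem_last hj

lemma IsStairColumns.sSup_last (hS : IsStairColumns (ℓ + 1) S) :
    sSup (S (ℓ + 1)) ∈ S (ℓ + 1) ∧ ∀ j ∈ S (ℓ + 1), j ≤ sSup (S (ℓ + 1)) := by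
  have hbdd : BddAbove (S (ℓ + 1)) := ⟨ℓ + 1, fun j hj => (hS.mem_last hj).2⟩
  exact ⟨Nat.sSup_mem (hS (ℓ + 1) (by omega) le_rfl).1 hbdd, fun j hj => le_csSup hbdd hj⟩

lemma squareDots_congr {S' : ℕ → Set ℕ} (h : ∀ i, 1 ≤ i → i ≤ ℓ → S i = S' i) :
    squareDots ℓ S = squareDots ℓ S' := by
  induction ℓ with
  | zero => rfl
  | succ ℓ ih =>
    simp only [squareDots, h (ℓ + 1) (by omega) le_rfl, ih fun i h1 h2 => h i h1 (by omega)]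

lemma squareDots_bounds (hS : IsStairColumns ℓ S) :
    ∀ p ∈ squareDots ℓ S, 1 ≤ p.1 ∧ p.1 ≤ ℓ ∧ 1 ≤ p.2 ∧ p.2 ≤ ℓ := by
  induction ℓ with
  | zero => simp [squareDots]
  | succ ℓ ih =>
    refine forall_mem_addColumn.2 ⟨fun p hp => ?_, fun j hj => ?_⟩
    · have := ih hS.of_succ p hp
      have := rowShift_cases (sSup (S (ℓ + 1))) p.2
      omega
    · have := hS.mem_last hj
      omega

lemma squareDots_fst_lt (hS : IsStairColumns ℓ S) : ∀ p ∈ squareDots ℓ S, p.1 < ℓ + 1 :=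
  fun p hp => Nat.lt_succ_of_le (squareDots_bounds hS p hp).2.1

lemma squareDots_finite (hS : IsStairColumns ℓ S) : (squareDots ℓ S).Finite :=
  ((Set.finite_Icc 1 ℓ).prod (Set.finite_Icc 1 ℓ)).subset fun p hp => by
    obtain ⟨h1, h2, h3, h4⟩ := squareDots_bounds hS p hp
    exact ⟨⟨h1, h2⟩, h3, h4⟩

lemma exists_mem_squareDots_of_col (hS : IsStairColumns ℓ S) {i : ℕ} (h1 : 1 ≤ i) (h2 : i ≤ ℓ) :
    ∃ j, (i, j) ∈ squareDots ℓ S := by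
  induction ℓ with
  | zero => omega
  | succ ℓ ih =>
    rcases Nat.lt_or_eq_of_le h2 with h2 | rfl
    · obtain ⟨j, hj⟩ := ih hS.of_succ (by omega)
      exact ⟨_, rowShift_mem_addColumn.2 (Or.inl hj)⟩
    · exact ⟨_, mem_addColumn.2 (Or.inr ⟨rfl, hS.sSup_last.1⟩)⟩

lemma exists_mem_squareDots_of_row (hS : IsStairColumns ℓ S) {j : ℕ} (h1 : 1 ≤ j) (h2 : j ≤ ℓ) :
    ∃ i, (i, j) ∈ squareDots ℓ S := by
  induction ℓ generalizing j with
  | zero => omega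
  | succ ℓ ih =>
    by_cases hj : j = sSup (S (ℓ + 1))
    · exact ⟨ℓ + 1, mem_addColumn.2 (Or.inr ⟨rfl, hj ▸ hS.sSup_last.1⟩)⟩
    · obtain ⟨j', rfl⟩ := exists_rowShift_eq hj
      have := rowShift_cases (sSup (S (ℓ + 1))) j'
      have := hS.mem_last hS.sSup_last.1
      obtain ⟨i, hi⟩ := ih (j := j') hS.of_succ (by omega) (by omega)
      exact ⟨i, rowShift_mem_addColumn.2 (Or.inl hi)⟩

end squareDots

lemma isEnrichedDots_squareDots {ℓ : ℕ} {S : ℕ → Set ℕ} (hS : IsStairColumns ℓ S) :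
    IsEnrichedDots ℓ (squareDots ℓ S) := by
  refine ⟨squareDots_bounds hS, fun i => exists_mem_squareDots_of_col hS,
    fun j => exists_mem_squareDots_of_row hS, ?_⟩
  induction ℓ with
  | zero => simp [squareDots]
  | succ ℓ ih =>
    rw [squareDots_succ]
    have hlt := squareDots_fst_lt hS.of_succ
    obtain ⟨hm, hmax⟩ := hS.sSup_last
    refine forall_mem_addColumn.2 ⟨fun p hp => ?_, fun j hj => ?_⟩
    · rw [isLeftmostInRow_addColumn_rowShift (hlt p hp),
        isTopInColumn_addColumn_rowShift (hlt p hp)]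
      exact ih hS.of_succ p hp
    · rw [isLeftmostInRow_addColumn_new hlt, isTopInColumn_addColumn_new hlt]
      have hjm : (∀ j' ∈ S (ℓ + 1), j' ≤ j) ↔ j = sSup (S (ℓ + 1)) :=
        ⟨fun h => le_antisymm (hmax j hj) (h _ hm), fun h j' hj' => h ▸ hmax j' hj'⟩
      rw [hjm]
      constructor
      · -- every row other than the inserted one already holds an older dot
        intro h
        by_contra hne
        obtain ⟨j', rfl⟩ := exists_rowShift_eq hne
        have := rowShift_cases (sSup (S (ℓ + 1))) j'
        have := hS.mem_last hj
        have := hS.mem_last hm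
        obtain ⟨i, hi⟩ := exists_mem_squareDots_of_row hS.of_succ (j := j') (by omega) (by omega)
        exact h _ hi rfl
      · rintro rfl p _
        exact rowShift_ne _ _

def column (c : ℕ) (D : Set (ℕ × ℕ)) : Set ℕ := {j | (c, j) ∈ D}

def removeColumn (c m : ℕ) (D : Set (ℕ × ℕ)) : Set (ℕ × ℕ) :=
  {p | p.1 ≠ c ∧ (p.1, rowShift m p.2) ∈ D}

section removeColumn

variable {c m : ℕ} {D : Set (ℕ × ℕ)} {S : Set ℕ}

lemma column_addColumn (hD : ∀ p ∈ D, p.1 < c) : column c (addColumn c m D S) = S := by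
  ext j
  simp only [column, Set.mem_ofPred_eq, mem_addColumn, true_and]
  exact or_iff_right fun ⟨j', hj', _⟩ => (hD _ hj').false

lemma removeColumn_addColumn (hD : ∀ p ∈ D, p.1 < c) :
    removeColumn c m (addColumn c m D S) = D := by
  ext p
  simp only [removeColumn, Set.mem_ofPred_eq, rowShift_mem_addColumn]
  constructor
  · rintro ⟨hc, hp | ⟨hc', -⟩⟩
    exacts [hp, absurd hc' hc]
  · exact fun hp => ⟨(hD p hp).ne, Or.inl hp⟩

lemma addColumn_removeColumn (hrow : ∀ p ∈ D, p.2 = m → p.1 = c) :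
    addColumn c m (removeColumn c m D) (column c D) = D := by
  ext ⟨i, j⟩
  simp only [mem_addColumn, removeColumn, column, Set.mem_ofPred_eq]
  constructor
  · rintro (⟨j', ⟨-, hj'⟩, rfl⟩ | ⟨rfl, hj⟩)
    exacts [hj', hj]
  · intro hp
    by_cases hi : i = c
    · exact Or.inr ⟨hi, hi ▸ hp⟩
    · obtain ⟨j', rfl⟩ := exists_rowShift_eq fun hj => hi (hrow _ hp hj)
      exact Or.inl ⟨j', ⟨hi, hp⟩, rfl⟩

end removeColumn

lemma eq_of_squareDots_eq {ℓ : ℕ} {S S' : ℕ → Set ℕ} (hS : IsStairColumns ℓ S)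
    (hS' : IsStairColumns ℓ S') (h : squareDots ℓ S = squareDots ℓ S') :
    ∀ i, 1 ≤ i → i ≤ ℓ → S i = S' i := by
  induction ℓ with
  | zero => intro i _ _; omega
  | succ ℓ ih =>
    rw [squareDots_succ, squareDots_succ] at h
    have hlast : S (ℓ + 1) = S' (ℓ + 1) := by
      have := congrArg (column (ℓ + 1)) h
      rwa [column_addColumn (squareDots_fst_lt hS.of_succ),
        column_addColumn (squareDots_fst_lt hS'.of_succ)] at this
    have hprev : squareDots ℓ S = squareDots ℓ S' := by
      rw [← removeColumn_addColumn (squareDots_fst_lt hS.of_succ),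
        ← removeColumn_addColumn (squareDots_fst_lt hS'.of_succ), h, hlast]
    intro i h1 h2
    rcases Nat.lt_or_eq_of_le h2 with h2 | rfl
    · exact ih hS.of_succ hS'.of_succ hprev i h1 (by omega)
    · exact hlast

namespace IsEnrichedDots

variable {ℓ : ℕ} {D : Set (ℕ × ℕ)}

lemma sSup_column (hE : IsEnrichedDots (ℓ + 1) D) :
    sSup (column (ℓ + 1) D) ∈ column (ℓ + 1) D ∧
      ∀ j ∈ column (ℓ + 1) D, j ≤ sSup (column (ℓ + 1) D) := by
  have hbdd : BddAbove (column (ℓ + 1) D) := ⟨ℓ + 1, fun j hj => (hE.bounds _ hj).2.2.2⟩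
  exact ⟨Nat.sSup_mem (hE.col (ℓ + 1) (by omega) le_rfl) hbdd, fun j hj => le_csSup hbdd hj⟩

/-- The topmost dot of the last column is also leftmost in its row. -/
lemma eq_of_row_sSup_column (hE : IsEnrichedDots (ℓ + 1) D) :
    ∀ p ∈ D, p.2 = sSup (column (ℓ + 1) D) → p.1 = ℓ + 1 := by
  obtain ⟨hm, hmax⟩ := hE.sSup_column
  have htop : IsLeftmostInRow D (ℓ + 1, sSup (column (ℓ + 1) D)) :=
    (hE.leftmost_iff_top _ hm).2 fun q hq hq1 =>
      hmax q.2 (by rwa [show q = (ℓ + 1, q.2) from Prod.ext hq1 rfl] at hq)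
  intro p hp hp2
  have := htop p hp hp2
  have := (hE.bounds p hp).2.1
  omega

lemma removeColumn (hE : IsEnrichedDots (ℓ + 1) D) :
    IsEnrichedDots ℓ (removeColumn (ℓ + 1) (sSup (column (ℓ + 1) D)) D) := by
  obtain ⟨hm, hmax⟩ := hE.sSup_column
  have hrow := hE.eq_of_row_sSup_column
  set m := sSup (column (ℓ + 1) D)
  have hD := addColumn_removeColumn hrow
  have hm1 := hE.bounds _ hm
  refine ⟨fun p ⟨hp1, hp⟩ => ?_, fun i h1 h2 => ?_, fun j h1 h2 => ?_, fun p ⟨hp1, hp⟩ => ?_⟩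
  · have := hE.bounds _ hp
    have := rowShift_cases m p.2
    omega
  · obtain ⟨j, hj⟩ := hE.col i h1 (by omega)
    obtain ⟨j', rfl⟩ := exists_rowShift_eq fun h => (by have := hrow _ hj h; omega : False)
    exact ⟨j', by omega, hj⟩
  · -- a dot of the last column in this row is not topmost, hence not leftmost
    have := rowShift_cases m j
    obtain ⟨i, hi⟩ := hE.row (rowShift m j) (by omega) (by omega)
    by_cases hi' : i = ℓ + 1
    · subst hi'
      have hnot : ¬ IsTopInColumn D (ℓ + 1, rowShift m j) := fun h =>
        rowShift_ne m j (le_antisymm (hmax _ hi) (h _ hm rfl))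
      rw [← hE.leftmost_iff_top _ hi] at hnot
      obtain ⟨q, hq, hq2, hq1⟩ : ∃ q ∈ D, q.2 = rowShift m j ∧ q.1 < ℓ + 1 := by
        simpa [IsLeftmostInRow] using hnot
      exact ⟨q.1, hq1.ne, hq2 ▸ hq⟩
    · exact ⟨i, hi', hi⟩
  · have hlt : p.1 < ℓ + 1 := by have := (hE.bounds _ hp).2.1; omega
    have := hE.leftmost_iff_top _ hp
    rw [← hD, isLeftmostInRow_addColumn_rowShift hlt, isTopInColumn_addColumn_rowShift hlt] at this
    exact this

end IsEnrichedDots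

lemma exists_squareDots_eq {ℓ : ℕ} {D : Set (ℕ × ℕ)} (hE : IsEnrichedDots ℓ D) :
    ∃ S, IsStairColumns ℓ S ∧ squareDots ℓ S = D := by
  induction ℓ generalizing D with
  | zero =>
    refine ⟨fun _ => ∅, fun i _ _ => by omega, ?_⟩
    exact (Set.eq_empty_of_forall_notMem fun p hp => by have := hE.bounds p hp; omega).symm
  | succ ℓ ih =>
    obtain ⟨S, hS, hSD⟩ := ih hE.removeColumn
    refine ⟨Function.update S (ℓ + 1) (column (ℓ + 1) D), fun i h1 h2 => ?_, ?_⟩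
    · rcases Nat.lt_or_eq_of_le h2 with h2 | rfl
      · rw [Function.update_of_ne (by omega)]
        exact hS i h1 (by omega)
      · rw [Function.update_self]
        exact ⟨hE.col _ h1 le_rfl, fun j hj => (hE.bounds _ hj).2.2⟩
    · rw [squareDots_succ, Function.update_self,
        squareDots_congr fun i _ h2 => Function.update_of_ne (show i ≠ ℓ + 1 by omega) _ _, hSD]
      exact addColumn_removeColumn hE.eq_of_row_sSup_column

def stairDots (ℓ : ℕ) (S : ℕ → Set ℕ) : Set (ℕ × ℕ) := {p | 1 ≤ p.1 ∧ p.1 ≤ ℓ ∧ p.2 ∈ S p.1}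

section stairDots

variable {ℓ : ℕ} {S : ℕ → Set ℕ}

lemma stairDots_zero : stairDots 0 S = ∅ :=
  Set.eq_empty_of_forall_notMem fun _ ⟨h1, h2, _⟩ => by omega

lemma stairDots_succ : stairDots (ℓ + 1) S = stairDots ℓ S ∪ (ℓ + 1, ·) '' S (ℓ + 1) := by
  ext ⟨i, j⟩
  simp only [stairDots, Set.mem_union, Set.mem_ofPred_eq, Set.mem_image, Prod.mk.injEq]
  constructor
  · rintro ⟨h1, h2, hj⟩
    rcases Nat.lt_or_eq_of_le h2 with h2 | rfl
    exacts [Or.inl ⟨h1, by omega, hj⟩, Or.inr ⟨j, hj, rfl, rfl⟩]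
  · rintro (⟨h1, h2, hj⟩ | ⟨j, hj, rfl, rfl⟩)
    exacts [⟨h1, by omega, hj⟩, ⟨by omega, le_rfl, hj⟩]

lemma stairDots_bounds (hS : IsStairColumns ℓ S) :
    ∀ p ∈ stairDots ℓ S, 1 ≤ p.1 ∧ p.1 ≤ ℓ ∧ 1 ≤ p.2 ∧ p.2 ≤ p.1 :=
  fun _ ⟨h1, h2, hj⟩ => ⟨h1, h2, (hS _ h1 h2).2 _ hj⟩

lemma stairDots_finite (hS : IsStairColumns ℓ S) : (stairDots ℓ S).Finite :=
  ((Set.finite_Icc 1 ℓ).prod (Set.finite_Icc 1 ℓ)).subset fun p hp => by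
    obtain ⟨h1, h2, h3, h4⟩ := stairDots_bounds hS p hp
    exact ⟨⟨h1, h2⟩, h3, by omega⟩

lemma stairDots_fst_lt (hS : IsStairColumns ℓ S) : ∀ p ∈ stairDots ℓ S, p.1 < ℓ + 1 :=
  fun p hp => Nat.lt_succ_of_le (stairDots_bounds hS p hp).2.1

end stairDots

lemma sep_image_eq {α β : Type*} (f : α → β) (s : Set α) (P : β → Prop) :
    {y ∈ f '' s | P y} = f '' {x ∈ s | P (f x)} :=
  (Set.image_inter_preimage f s {y | P y}).symm

section ncard

variable {c m : ℕ} {D : Set (ℕ × ℕ)} {S : Set ℕ}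

lemma ncard_sep_of_eq_union_column {E : Set (ℕ × ℕ)} (hE : E = D ∪ (c, ·) '' S) (hD : D.Finite)
    (hS : S.Finite) (hc : ∀ p ∈ D, p.1 < c) (P : ℕ × ℕ → Prop) :
    {p ∈ E | P p}.ncard = {p ∈ D | P p}.ncard + {j ∈ S | P (c, j)}.ncard := by
  subst hE
  have hunion : {p ∈ D ∪ (c, ·) '' S | P p} = {p ∈ D | P p} ∪ {p ∈ (c, ·) '' S | P p} :=
    Set.sep_union
  have hdisj : Disjoint {p ∈ D | P p} {p ∈ (c, ·) '' S | P p} :=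
    Set.disjoint_left.2 fun p hp ⟨⟨j, _, hj⟩, _⟩ => (hc p hp.1).ne (by rw [← hj])
  rw [hunion, Set.ncard_union_eq hdisj (hD.subset (Set.sep_subset _ _))
    ((hS.image _).subset (Set.sep_subset _ _)), sep_image_eq,
    Set.ncard_image_of_injective _ (Prod.mk_right_injective c)]

lemma ncard_sep_of_eq_addColumn {E : Set (ℕ × ℕ)} (hE : E = addColumn c m D S) (hD : D.Finite)
    (hS : S.Finite) (hc : ∀ p ∈ D, p.1 < c) (P : ℕ × ℕ → Prop) :
    {p ∈ E | P p}.ncard = {p ∈ D | P (p.1, rowShift m p.2)}.ncard + {j ∈ S | P (c, j)}.ncard := by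
  have hinj : Function.Injective fun p : ℕ × ℕ => (p.1, rowShift m p.2) :=
    fun p q h => by
      simp only [Prod.mk.injEq] at h
      exact Prod.ext h.1 ((rowShift_strictMono m).injective h.2)
  rw [ncard_sep_of_eq_union_column hE (hD.image fun p : ℕ × ℕ => (p.1, rowShift m p.2)) hS
      (Set.forall_mem_image.2 fun p hp => hc p hp),
    sep_image_eq,
    Set.ncard_image_of_injective _ hinj]

end ncard

lemma ncard_squareDots {ℓ : ℕ} {S : ℕ → Set ℕ} (hS : IsStairColumns ℓ S) :
    (squareDots ℓ S).ncard = (stairDots ℓ S).ncard := by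
  induction ℓ with
  | zero => simp [squareDots, stairDots_zero]
  | succ ℓ ih =>
    have key := ncard_sep_of_eq_addColumn squareDots_succ (squareDots_finite hS.of_succ)
      hS.finite_last (squareDots_fst_lt hS.of_succ) fun _ => True
    have key' := ncard_sep_of_eq_union_column stairDots_succ (stairDots_finite hS.of_succ)
      hS.finite_last (stairDots_fst_lt hS.of_succ) fun _ => True
    simp only [and_true, Set.ofPred_mem_eq] at key key'
    rw [key, key', ih hS.of_succ]

def lminSet (D : Set (ℕ × ℕ)) : Set (ℕ × ℕ) := {p ∈ D | ∀ q ∈ D, q.2 < p.2 → p.1 < q.1}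

lemma ncard_lminSet_squareDots {ℓ : ℕ} {S : ℕ → Set ℕ} (hS : IsStairColumns ℓ S) :
    (lminSet (squareDots ℓ S)).ncard = {p ∈ stairDots ℓ S | p.2 = 1}.ncard := by
  induction ℓ with
  | zero => simp [lminSet, squareDots, stairDots_zero]
  | succ ℓ ih =>
    rw [lminSet, ncard_sep_of_eq_addColumn squareDots_succ (squareDots_finite hS.of_succ)
        hS.finite_last (squareDots_fst_lt hS.of_succ),
      ncard_sep_of_eq_union_column stairDots_succ (stairDots_finite hS.of_succ)
        hS.finite_last (stairDots_fst_lt hS.of_succ), ← ih hS.of_succ]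
    congr 2
    · refine Set.sep_ext_iff.2 fun p hp => ?_
      rw [squareDots_succ, forall_mem_addColumn]
      simp only [(rowShift_strictMono _).lt_iff_lt]
      exact and_iff_left fun _ _ _ => squareDots_fst_lt hS.of_succ p hp
    · -- for `j > 1` some dot in row `j - 1` is not strictly to the right of the new column
      refine Set.sep_ext_iff.2 fun j hj => ⟨fun h => ?_, fun h q hq hq2 => ?_⟩
      · by_contra hne
        have := hS.mem_last hj
        obtain ⟨i, hi⟩ := exists_mem_squareDots_of_row hS (j := j - 1) (by omega) (by omega)
        have := h _ hi (by dsimp only; omega)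
        have := (squareDots_bounds hS _ hi).2.1
        omega
      · have := (squareDots_bounds hS _ hq).2.2.1
        omega

/-- The threshold `t` plays the role of a dot of depth `t` to the right of all columns. -/
def stairRmaxLT (D : Set (ℕ × ℕ)) (t : ℕ) : Set (ℕ × ℕ) :=
  {p ∈ D | p.1 - p.2 < t ∧ ∀ q ∈ D, p.1 < q.1 → p.1 - p.2 < q.1 - q.2}

/-- In a square of side `ℓ` the depth of a dot is `ℓ - p.2`, so depths compare as rows. -/
def squareRmaxLT (ℓ : ℕ) (D : Set (ℕ × ℕ)) (t : ℕ) : Set (ℕ × ℕ) :=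
  {p ∈ D | ℓ - p.2 < t ∧ ∀ q ∈ D, p.1 < q.1 → q.2 < p.2}

section rmax

variable {ℓ : ℕ} {S : ℕ → Set ℕ}

lemma ncard_stairRmaxLT_succ (hS : IsStairColumns (ℓ + 1) S) (t : ℕ) :
    (stairRmaxLT (stairDots (ℓ + 1) S) t).ncard =
      (stairRmaxLT (stairDots ℓ S) (min t (ℓ + 1 - sSup (S (ℓ + 1))))).ncard +
        {j ∈ S (ℓ + 1) | ℓ + 1 - j < t}.ncard := by
  obtain ⟨hm, hmax⟩ := hS.sSup_last
  rw [stairRmaxLT, ncard_sep_of_eq_union_column stairDots_succ (stairDots_finite hS.of_succ)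
    hS.finite_last (stairDots_fst_lt hS.of_succ)]
  congr 2
  · refine Set.sep_ext_iff.2 fun p hp => ?_
    have := stairDots_bounds hS.of_succ p hp
    simp only [stairDots_succ, Set.mem_union, or_imp, forall_and, Set.forall_mem_image, lt_min_iff]
    have hlast : (∀ j ∈ S (ℓ + 1), p.1 < ℓ + 1 → p.1 - p.2 < ℓ + 1 - j) ↔
        p.1 - p.2 < ℓ + 1 - sSup (S (ℓ + 1)) :=
      ⟨fun h => h _ hm (by omega), fun h j hj _ => by have := hmax j hj; omega⟩
    rw [hlast]
    tauto
  · refine Set.sep_ext_iff.2 fun j hj => and_iff_left fun q hq hlt => ?_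
    have := stairDots_bounds hS q hq
    omega

lemma ncard_squareRmaxLT_succ (hS : IsStairColumns (ℓ + 1) S) (t : ℕ) :
    (squareRmaxLT (ℓ + 1) (squareDots (ℓ + 1) S) t).ncard =
      (squareRmaxLT ℓ (squareDots ℓ S) (min t (ℓ + 1 - sSup (S (ℓ + 1))))).ncard +
        {j ∈ S (ℓ + 1) | ℓ + 1 - j < t}.ncard := by
  obtain ⟨hm, hmax⟩ := hS.sSup_last
  rw [squareRmaxLT, ncard_sep_of_eq_addColumn squareDots_succ (squareDots_finite hS.of_succ)
    hS.finite_last (squareDots_fst_lt hS.of_succ)]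
  congr 2
  · refine Set.sep_ext_iff.2 fun p hp => ?_
    have := squareDots_bounds hS.of_succ p hp
    have := hS.mem_last hm
    have := rowShift_cases (sSup (S (ℓ + 1))) p.2
    rw [squareDots_succ, forall_mem_addColumn]
    simp only [(rowShift_strictMono _).lt_iff_lt, lt_min_iff]
    have hlast : (∀ j ∈ S (ℓ + 1), p.1 < ℓ + 1 → j < rowShift (sSup (S (ℓ + 1))) p.2) ↔
        sSup (S (ℓ + 1)) < rowShift (sSup (S (ℓ + 1))) p.2 :=
      ⟨fun h => h _ hm (by omega), fun h j hj _ => (hmax j hj).trans_lt h⟩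
    rw [hlast]
    constructor
    · rintro ⟨h1, h2, h3⟩
      exact ⟨⟨by omega, by omega⟩, h2⟩
    · rintro ⟨⟨h1, h2⟩, h3⟩
      exact ⟨by omega, h3, by omega⟩
  · refine Set.sep_ext_iff.2 fun j hj => and_iff_left fun q hq hlt => ?_
    have := squareDots_bounds hS q hq
    omega

lemma ncard_stairRmaxLT_eq (hS : IsStairColumns ℓ S) (t : ℕ) :
    (stairRmaxLT (stairDots ℓ S) t).ncard = (squareRmaxLT ℓ (squareDots ℓ S) t).ncard := by
  induction ℓ generalizing t with
  | zero => simp [stairRmaxLT, squareRmaxLT, stairDots_zero, squareDots]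
  | succ ℓ ih => rw [ncard_stairRmaxLT_succ hS, ncard_squareRmaxLT_succ hS, ih hS.of_succ]

end rmax

lemma stairDots_cut_iff_squareDots_cut {ℓ : ℕ} {S : ℕ → Set ℕ} (hS : IsStairColumns ℓ S)
    (k : ℕ) : (∀ p ∈ stairDots ℓ S, k < p.1 → k < p.2) ↔
      ∀ p ∈ squareDots ℓ S, p.1 ≤ k ∧ p.2 ≤ k ∨ k < p.1 ∧ k < p.2 := by
  induction ℓ with
  | zero => simp [stairDots_zero, squareDots]
  | succ ℓ ih =>
    by_cases hk : ℓ + 1 ≤ k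
    · refine ⟨fun _ p hp => ?_, fun _ p hp => ?_⟩
      · have := squareDots_bounds hS p hp
        omega
      · have := stairDots_bounds hS p hp
        omega
    obtain ⟨hm, hmax⟩ := hS.sSup_last
    rw [stairDots_succ, squareDots_succ, forall_mem_addColumn]
    simp only [Set.mem_union, or_imp, forall_and, Set.forall_mem_image]
    have hlast : (∀ j ∈ S (ℓ + 1), ℓ + 1 ≤ k ∧ j ≤ k ∨ k < ℓ + 1 ∧ k < j) ↔
        ∀ j ∈ S (ℓ + 1), k < ℓ + 1 → k < j :=
      forall₂_congr fun j _ => by omega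
    rw [hlast, ih hS.of_succ]
    -- once the new column lies above row `k`, so does the inserted row
    refine and_congr_left fun hnew => forall₂_congr fun p _ => ?_
    have := hnew hm (by omega)
    have := rowShift_cases (sSup (S (ℓ + 1))) p.2
    omega

def translateDiag (a : ℕ) (D : Set (ℕ × ℕ)) : Set (ℕ × ℕ) :=
  (fun p : ℕ × ℕ => (p.1 + a, p.2 + a)) '' D

lemma rowShift_add (m a j : ℕ) : rowShift (m + a) (j + a) = rowShift m j + a := by
  have := rowShift_cases m j
  have := rowShift_cases (m + a) (j + a)
  omega

lemma addColumn_translateDiag (c m a : ℕ) (D : Set (ℕ × ℕ)) (S : Set ℕ) :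
    addColumn (a + c) (m + a) (translateDiag a D) ((· + a) '' S) =
      translateDiag a (addColumn c m D S) := by
  simp only [addColumn, translateDiag, Set.image_union, Set.image_image, rowShift_add,
    Nat.add_comm a c]

lemma addColumn_union_of_lt {c m : ℕ} {A B : Set (ℕ × ℕ)} {S : Set ℕ} (hA : ∀ p ∈ A, p.2 < m) :
    addColumn c m (A ∪ B) S = A ∪ addColumn c m B S := by
  have hid : (fun p : ℕ × ℕ => (p.1, rowShift m p.2)) '' A = A :=
    (Set.image_congr fun p hp => by
      have := rowShift_cases m p.2
      have := hA p hp
      exact Prod.ext rfl (by omega)).trans (Set.image_id' A)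
  rw [addColumn, addColumn, Set.image_union, hid, Set.union_assoc]

lemma sSup_image_add {s : Set ℕ} (hs : s.Nonempty) (hbdd : BddAbove s) (a : ℕ) :
    sSup ((· + a) '' s) = sSup s + a :=
  IsGreatest.csSup_eq ⟨⟨_, Nat.sSup_mem hs hbdd, rfl⟩,
    Set.forall_mem_image.2 fun _ hj => Nat.add_le_add_right (le_csSup hbdd hj) a⟩

lemma squareDots_add {a b : ℕ} {S Sa Sb : ℕ → Set ℕ} (hSa : IsStairColumns a Sa)
    (hSb : IsStairColumns b Sb) (h1 : ∀ i, 1 ≤ i → i ≤ a → S i = Sa i)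
    (h2 : ∀ i, 1 ≤ i → i ≤ b → S (a + i) = (· + a) '' Sb i) :
    squareDots (a + b) S = squareDots a Sa ∪ translateDiag a (squareDots b Sb) := by
  induction b with
  | zero => simp [squareDots, translateDiag, squareDots_congr h1]
  | succ b ih =>
    have hlast := h2 (b + 1) (by omega) le_rfl
    have hbdd : BddAbove (Sb (b + 1)) := ⟨b + 1, fun j hj => (hSb.mem_last hj).2⟩
    have hrows : ∀ p ∈ squareDots a Sa, p.2 < sSup (Sb (b + 1)) + a := fun p hp => by
      have := (squareDots_bounds hSa p hp).2.2.2
      have := hSb.mem_last hSb.sSup_last.1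
      omega
    rw [← Nat.add_assoc, squareDots_succ, Nat.add_assoc, hlast,
      sSup_image_add (hSb (b + 1) (by omega) le_rfl).1 hbdd,
      ih hSb.of_succ fun i h h' => h2 i h (by omega), addColumn_union_of_lt hrows,
      addColumn_translateDiag]
    rfl

lemma column_stairDots {ℓ i : ℕ} {S : ℕ → Set ℕ} (h1 : 1 ≤ i) (h2 : i ≤ ℓ) :
    column i (stairDots ℓ S) = S i := by
  ext j
  simp [column, stairDots, h1, h2]

lemma stairDots_congr {ℓ : ℕ} {S S' : ℕ → Set ℕ} (h : ∀ i, 1 ≤ i → i ≤ ℓ → S i = S' i) :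
    stairDots ℓ S = stairDots ℓ S' := by
  ext p
  simp only [stairDots, Set.mem_ofPred_eq]
  exact and_congr_right fun h1 => and_congr_right fun h2 => by rw [h p.1 h1 h2]

lemma column_translateDiag_add (a i : ℕ) (D : Set (ℕ × ℕ)) :
    column (a + i) (translateDiag a D) = (· + a) '' column i D := by
  ext j
  simp only [column, translateDiag, Set.mem_ofPred_eq, Set.mem_image, Prod.mk.injEq, Prod.exists]
  constructor
  · rintro ⟨i', j', h, hi, rfl⟩
    exact ⟨j', by rwa [show i = i' by omega], rfl⟩
  · rintro ⟨j', h, rfl⟩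
    exact ⟨i, j', h, by omega, rfl⟩

lemma column_union (c : ℕ) (A B : Set (ℕ × ℕ)) : column c (A ∪ B) = column c A ∪ column c B :=
  rfl

lemma column_eq_empty {c : ℕ} {D : Set (ℕ × ℕ)} (h : ∀ p ∈ D, p.1 ≠ c) : column c D = ∅ :=
  Set.eq_empty_of_forall_notMem fun _ hj => h _ hj rfl

namespace Filling

lemma ext_of {T T' : Filling} (h1 : T.len = T'.len) (h2 : T.shape = T'.shape)
    (h3 : T.dots = T'.dots) : T = T' := by
  cases T; cases T'; cases h1; cases h2; cases h3; rfl

lemma shape_eq_ite (T : Filling) {h : ℕ → ℕ} (hT : ∀ i, 1 ≤ i → i ≤ T.len → T.shape i = h i) :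
    T.shape = fun i => if 1 ≤ i ∧ i ≤ T.len then h i else 0 := by
  funext i
  split_ifs with hi
  · exact hT i hi.1 hi.2
  · exact T.shape_eq_zero i hi

def ofDots (ℓ : ℕ) (hℓ : 1 ≤ ℓ) (height : ℕ → ℕ) (hpos : ∀ i, 1 ≤ i → 1 ≤ height i)
    (hmono : Monotone height) (D : Set (ℕ × ℕ))
    (hD : ∀ p ∈ D, 1 ≤ p.1 ∧ p.1 ≤ ℓ ∧ 1 ≤ p.2 ∧ p.2 ≤ height p.1) : Filling where
  len := ℓ
  shape i := if 1 ≤ i ∧ i ≤ ℓ then height i else 0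
  dots := D
  len_pos := hℓ
  shape_pos i h1 h2 := by rw [if_pos ⟨h1, h2⟩]; exact hpos i h1
  shape_mono i j h1 h2 h3 := by
    rw [if_pos ⟨h1, h2.trans h3⟩, if_pos ⟨h1.trans h2, h3⟩]; exact hmono h2
  shape_eq_zero _ hi := if_neg hi
  dots_mem p hp := by
    obtain ⟨h1, h2, h3, h4⟩ := hD p hp
    exact ⟨h1, h2, h3, by rwa [if_pos ⟨h1, h2⟩]⟩

def cols (T : Filling) (i : ℕ) : Set ℕ := column i T.dots

lemma dots_eq_stairDots (T : Filling) : T.dots = stairDots T.len T.cols := by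
  ext ⟨i, j⟩
  exact ⟨fun h => ⟨(T.dots_mem _ h).1, (T.dots_mem _ h).2.1, h⟩, fun h => h.2.2⟩

lemma isStairColumns_cols {T : Filling} (hpos : T.ColumnPositive) (hst : T.Staircase) :
    IsStairColumns T.len T.cols := fun i h1 h2 =>
  ⟨hpos i h1 h2, fun j hj => by
    obtain ⟨-, -, h3, h4⟩ := T.dots_mem _ hj
    exact ⟨h3, hst i h1 h2 ▸ h4⟩⟩

lemma Enriched.isEnrichedDots {R : Filling} (hR : R.Enriched) : IsEnrichedDots R.len R.dots :=
  ⟨fun p hp => by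
    obtain ⟨h1, h2, h3, h4⟩ := R.dots_mem p hp
    exact ⟨h1, h2, h3, hR.1 _ h1 h2 ▸ h4⟩, hR.2.1, hR.2.2.1, hR.2.2.2⟩

lemma ncard_MinSet (T : Filling) : T.MinSet.ncard = {p ∈ T.dots | p.2 = 1}.ncard := by
  rw [← Set.ncard_image_of_injective _ (Prod.mk_left_injective 1)]
  congr 1
  ext ⟨i, j⟩
  simp only [MinSet, Set.mem_image, Set.mem_ofPred_eq, Prod.mk.injEq]
  constructor
  · rintro ⟨i, ⟨-, -, h⟩, rfl, rfl⟩
    exact ⟨h, rfl⟩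
  · rintro ⟨h, rfl⟩
    exact ⟨i, ⟨(T.dots_mem _ h).1, (T.dots_mem _ h).2.1, h⟩, rfl, rfl⟩

end Filling

open Filling

abbrev ColPosStaircase : Type := {T : Filling // T.ColumnPositive ∧ T.Staircase}

noncomputable def toEnriched (T : ColPosStaircase) : {R : Filling // R.Enriched} :=
  have hE := isEnrichedDots_squareDots (isStairColumns_cols T.2.1 T.2.2)
  ⟨ofDots T.1.len T.1.len_pos (fun _ => T.1.len) (fun _ _ => T.1.len_pos) monotone_const
      (squareDots T.1.len T.1.cols) hE.bounds,
    fun _ h1 h2 => if_pos ⟨h1, h2⟩, hE.col, hE.row, hE.leftmost_iff_top⟩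

section toEnriched

variable (T : ColPosStaircase)

lemma toEnriched_len : (toEnriched T).1.len = T.1.len := rfl

lemma toEnriched_dots : (toEnriched T).1.dots = squareDots T.1.len T.1.cols := rfl

lemma toEnriched_shape :
    (toEnriched T).1.shape = fun i => if 1 ≤ i ∧ i ≤ T.1.len then T.1.len else 0 :=
  rfl

lemma nDots_toEnriched : T.1.nDots = (toEnriched T).1.nDots := by
  rw [nDots, nDots, toEnriched_dots, ncard_squareDots (isStairColumns_cols T.2.1 T.2.2),
    ← dots_eq_stairDots]

lemma comp_toEnriched : T.1.comp = (toEnriched T).1.boxcomp := by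
  obtain ⟨T, hpos, hst⟩ := T
  unfold comp boxcomp
  congr 1
  ext k
  simp only [Set.mem_ofPred_eq, toEnriched_len, toEnriched_dots]
  refine and_congr_right fun h1 => and_congr_right fun h2 => ?_
  have hcut : k = T.len ∨ T.shape k < T.shape (k + 1) := by
    rcases Nat.lt_or_eq_of_le h2 with h2 | h2
    · rw [hst k h1 h2.le, hst (k + 1) (by omega) h2]
      exact Or.inr k.lt_succ_self
    · exact Or.inl h2
  rw [and_iff_right hcut, hst k h1 h2,
    ← stairDots_cut_iff_squareDots_cut (isStairColumns_cols hpos hst), ← dots_eq_stairDots]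

lemma ncard_MinSet_toEnriched : T.1.MinSet.ncard = (toEnriched T).1.lminDots := by
  rw [ncard_MinSet, dots_eq_stairDots, ← ncard_lminSet_squareDots (isStairColumns_cols T.2.1 T.2.2)]
  rfl

lemma rmaxDots_toEnriched : T.1.rmaxDots = (toEnriched T).1.rmaxDots := by
  obtain ⟨T, hpos, hst⟩ := T
  have hstair : T.rmaxDots = (stairRmaxLT T.dots T.len).ncard := by
    refine congrArg Set.ncard (Set.sep_ext_iff.2 fun p hp => ?_)
    obtain ⟨h1, h2, h3, -⟩ := T.dots_mem p hp
    rw [and_iff_right (by omega)]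
    refine forall₂_congr fun q hq => imp_congr_right fun _ => ?_
    obtain ⟨h1', h2', -, -⟩ := T.dots_mem q hq
    rw [hst _ h1 h2, hst _ h1' h2']
  have hsquare : (toEnriched ⟨T, hpos, hst⟩).1.rmaxDots =
      (squareRmaxLT T.len (squareDots T.len T.cols) T.len).ncard := by
    have hb := squareDots_bounds (isStairColumns_cols hpos hst)
    refine congrArg Set.ncard (Set.sep_ext_iff.2 fun p hp => ?_)
    obtain ⟨h1, h2, h3, h4⟩ := hb p hp
    rw [and_iff_right (by omega)]
    refine forall₂_congr fun q hq => imp_congr_right fun _ => ?_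
    obtain ⟨h1', h2', h3', h4'⟩ := hb q hq
    simp only [toEnriched_shape, if_pos (And.intro h1 h2), if_pos (And.intro h1' h2')]
    omega
  rw [hstair, hsquare, dots_eq_stairDots, ncard_stairRmaxLT_eq (isStairColumns_cols hpos hst)]

end toEnriched

lemma toEnriched_injective : Function.Injective toEnriched := by
  rintro ⟨T, hpos, hst⟩ ⟨T', hpos', hst'⟩ h
  have hlen : T.len = T'.len := congrArg (fun R => R.1.len) h
  have hsq : squareDots T.len T.cols = squareDots T'.len T'.cols := congrArg (fun R => R.1.dots) h
  rw [← hlen] at hsq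
  have hcols := eq_of_squareDots_eq (isStairColumns_cols hpos hst)
    (hlen ▸ isStairColumns_cols hpos' hst') hsq
  refine Subtype.ext (ext_of hlen ?_ ?_)
  · rw [T.shape_eq_ite hst, T'.shape_eq_ite hst', hlen]
  · rw [dots_eq_stairDots, dots_eq_stairDots, stairDots_congr hcols, hlen]

lemma toEnriched_surjective : Function.Surjective toEnriched := by
  rintro ⟨R, hR⟩
  obtain ⟨S, hS, hSR⟩ := exists_squareDots_eq hR.isEnrichedDots
  let T := ofDots R.len R.len_pos id (fun _ h => h) monotone_id (stairDots R.len S)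
    (stairDots_bounds hS)
  have hcols : ∀ i, 1 ≤ i → i ≤ R.len → T.cols i = S i := fun _ => column_stairDots
  have hpos : T.ColumnPositive := fun i h1 h2 => by
    obtain ⟨j, hj⟩ := (hS i h1 h2).1
    exact ⟨j, h1, h2, hj⟩
  refine ⟨⟨T, hpos, fun i h1 h2 => if_pos ⟨h1, h2⟩⟩, Subtype.ext (ext_of rfl ?_ ?_)⟩
  · rw [toEnriched_shape, R.shape_eq_ite hR.1]
    rfl
  · rw [toEnriched_dots, ← hSR]
    exact squareDots_congr hcols

lemma isBoxSum_toEnriched {T T' U : ColPosStaircase} (h : IsDsum T.1 T'.1 U.1) :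
    IsBoxSum (toEnriched T).1 (toEnriched T').1 (toEnriched U).1 := by
  obtain ⟨hlen, -, -, hdots⟩ := h
  rw [T.2.2 _ T.1.len_pos le_rfl] at hdots
  change U.1.dots = T.1.dots ∪ translateDiag T.1.len T'.1.dots at hdots
  have hleft : ∀ i, 1 ≤ i → i ≤ T.1.len → U.1.cols i = T.1.cols i := fun i h1 h2 => by
    rw [cols, hdots, column_union, column_eq_empty (D := translateDiag _ _), Set.union_empty]
    · rfl
    · rintro _ ⟨q, hq, rfl⟩
      have := (T'.1.dots_mem q hq).1
      dsimp only
      omega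
  have hright : ∀ i, 1 ≤ i → i ≤ T'.1.len → U.1.cols (T.1.len + i) = (· + T.1.len) '' T'.1.cols i :=
    fun i h1 _ => by
      rw [cols, hdots, column_union, column_translateDiag_add, column_eq_empty, Set.empty_union]
      · rfl
      · intro p hp
        have := (T.1.dots_mem p hp).2.1
        omega
  refine ⟨hlen, fun i h1 h2 => if_pos ⟨h1, h2⟩, ?_⟩
  rw [toEnriched_dots, hlen]
  exact squareDots_add (isStairColumns_cols T.2.1 T.2.2) (isStairColumns_cols T'.2.1 T'.2.2)
    hleft hright

/-- There is a bijection `g` from column-positive staircase fillings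
to enriched permutation fillings turning direct sums into boxed sums and preserving
the listed statistics. -/
theorem colpos_staircase_equiv_enriched :
    ∃ g : {T : Filling // T.ColumnPositive ∧ T.Staircase} → {R : Filling // R.Enriched},
      Function.Bijective g ∧
      (∀ T T' S : {T : Filling // T.ColumnPositive ∧ T.Staircase},
        Filling.IsDsum T.1 T'.1 S.1 → Filling.IsBoxSum (g T).1 (g T').1 (g S).1) ∧
      ∀ T : {T : Filling // T.ColumnPositive ∧ T.Staircase},
        T.1.len = (g T).1.len ∧
        T.1.nDots = (g T).1.nDots ∧
        T.1.comp = (g T).1.boxcomp ∧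
        T.1.MinSet.ncard = (g T).1.lminDots ∧
        T.1.rmaxDots = (g T).1.rmaxDots :=
  ⟨toEnriched, ⟨toEnriched_injective, toEnriched_surjective⟩, fun _ _ _ => isBoxSum_toEnriched,
    fun T => ⟨rfl, nDots_toEnriched T, comp_toEnriched T, ncard_MinSet_toEnriched T,
      rmaxDots_toEnriched T⟩⟩
end
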